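/- arXiv:1611.06783 — 8 statements merged into one kernel-verified Lean document; each statement's English description precedes it below -/
import Mathlib

section
/- If n > m > 1 are integers, then the resultant of Φ_n and Φ_m equals p^{φ(m)} if n/m = p^k for some prime p and integer k ≥ 1 (in particular m divides n), and equals 1 otherwise. -/
open Polynomial

/-- The resultant of two monic polynomials over `ℂ`, defined as
`∏_{α root of f} g(α)` (roots taken with multiplicity). -/
noncomputable def resultantAux (f g : Polynomial ℂ) : ℂ :=
  (f.roots.map fun a => g.eval a).prod

/-!
Over `ℂ`, `resultantAux (Φ n) (Φ m) = ∏_{ζ} Φ_m(ζ)` over the primitive `n`-th roots `ζ`. Put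
`R(d) = ∏_{ζ} Φ_d(ζ)`. As `∏_{d ∣ m} Φ_d = X^m - 1`, the `R(d)` with `d ∣ m` multiply to
`∏_{ζ} (ζ^m - 1)`. The map `ζ ↦ ζ^m` sends the primitive `n`-th roots onto the primitive `e`-th
roots, `e = n / gcd(n, m)`, every fibre having `φ(n)/φ(e)` elements, so this product is
`Φ_e(1)^{φ(n)/φ(e)}` (no sign, since `φ(n)` is even for `n > 2`). The candidate values
`Φ_{n/d}(1)^{φ(d)}` for `d ∣ n` and `1` otherwise have the same products over the divisors of `m`,
which reduces to `Φ_{p^k}(1) = p` and `Φ_k(1) = 1` for other `k > 1`. No `R(d)` with `d < n`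
vanishes, so induction over the divisors gives `R(m)` equal to its candidate value.
-/

open Finset
open scoped Nat

theorem MonoidHom.prod_comp_eq_prod_pow_of_surjective {G H M : Type*} [Group G] [Fintype G]
    [Group H] [Fintype H] [CommMonoid M] (π : G →* H) (hπ : Function.Surjective π)
    (F : H → M) :
    ∏ g, F (π g) = (∏ h, F h) ^ (Fintype.card G / Fintype.card H) := by
  classical
  set c := #{g | π g = 1}
  have hfiber (h : H) : #{g | π g = h} = c :=
    card_fiber_eq_of_mem_range π (hπ h) ⟨1, map_one π⟩
  have hcard : Fintype.card G = Fintype.card H * c := by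
    rw [← card_univ, card_eq_sum_card_fiberwise (f := π) (t := univ) (by simp)]
    simp [hfiber]
  rw [hcard, Nat.mul_div_cancel_left _ Fintype.card_pos, ← prod_pow,
    ← prod_fiberwise' univ π F]
  simp [hfiber]

namespace IsPrimitiveRoot

variable {K M : Type*} [CommRing K] [IsDomain K] [CommMonoid M] {η : K} {n : ℕ}

theorem prod_primitiveRoots_eq_prod_units [NeZero n] (hη : IsPrimitiveRoot η n) (f : K → M) :
    ∏ x ∈ primitiveRoots n K, f x = ∏ u : (ZMod n)ˣ, f (η ^ (u : ZMod n).val) := by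
  have hn : 0 < n := Nat.pos_of_neZero n
  symm
  refine prod_bij (fun u _ => η ^ (u : ZMod n).val) (fun u _ => ?_) (fun u _ v _ huv => ?_)
    (fun x hx => ?_) (fun _ _ => rfl)
  · exact (mem_primitiveRoots hn).2 ((hη.pow_iff_coprime hn _).2 (ZMod.val_coe_unit_coprime u))
  · exact Units.ext (ZMod.val_injective n (hη.pow_inj (ZMod.val_lt _) (ZMod.val_lt _) huv))
  · rw [mem_primitiveRoots hn] at hx
    obtain ⟨i, hi, rfl⟩ := hη.eq_pow_of_pow_eq_one hx.pow_eq_one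
    have hcop : i.Coprime n := (hη.pow_iff_coprime hn i).1 hx
    refine ⟨ZMod.unitOfCoprime i hcop, mem_univ _, ?_⟩
    rw [ZMod.coe_unitOfCoprime, ZMod.val_natCast, Nat.mod_eq_of_lt hi]

theorem prod_primitiveRoots_pow (hη : IsPrimitiveRoot η n) (hn : n ≠ 0) (f : K → M) (m : ℕ) :
    ∏ x ∈ primitiveRoots n K, f (x ^ m) =
      (∏ y ∈ primitiveRoots (n / n.gcd m) K, f y) ^ (φ n / φ (n / n.gcd m)) := by
  have : NeZero n := ⟨hn⟩
  set g := n.gcd m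
  set e := n / g
  have hg : 0 < g := Nat.gcd_pos_of_pos_left m (Nat.pos_of_ne_zero hn)
  have he : e ∣ n := Nat.div_dvd_of_dvd (Nat.gcd_dvd_left n m)
  have : NeZero e := ⟨fun h => hn (Nat.eq_zero_of_zero_dvd (h ▸ he))⟩
  have hθ : IsPrimitiveRoot (η ^ g) e := hη.pow_of_dvd hg.ne' (Nat.gcd_dvd_left n m)
  have hc : (m / g).Coprime e := by
    rw [Nat.coprime_comm]; exact Nat.coprime_div_gcd_div_gcd hg
  -- `x ↦ x ^ m` is `x ↦ x ^ g` followed by the permutation `y ↦ y ^ (m / g)` of the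
  -- primitive `e`-th roots, i.e. multiplication by the unit `cu` on exponents.
  set cu : (ZMod e)ˣ := ZMod.unitOfCoprime _ hc
  have hpow (u : (ZMod n)ˣ) : (η ^ (u : ZMod n).val) ^ m =
      (η ^ g) ^ ((cu * ZMod.unitsMap he u : (ZMod e)ˣ) : ZMod e).val := by
    have hcast : ((cu * ZMod.unitsMap he u : (ZMod e)ˣ) : ZMod e) =
        ((m / g * (u : ZMod n).val : ℕ) : ZMod e) := by
      rw [Units.val_mul, ZMod.unitsMap_val, ZMod.coe_unitOfCoprime, Nat.cast_mul, ZMod.cast_eq_val]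
    rw [hcast, ZMod.val_natCast, pow_eq_pow_of_modEq (Nat.mod_modEq _ _) hθ.pow_eq_one,
      ← pow_mul, ← pow_mul, ← mul_assoc, Nat.mul_div_cancel' (Nat.gcd_dvd_right n m), mul_comm]
  calc ∏ x ∈ primitiveRoots n K, f (x ^ m)
      = ∏ u : (ZMod n)ˣ, f ((η ^ g) ^ ((cu * ZMod.unitsMap he u : (ZMod e)ˣ) : ZMod e).val) := by
        rw [hη.prod_primitiveRoots_eq_prod_units (fun x => f (x ^ m))]
        simp only [hpow]
    _ = (∏ v : (ZMod e)ˣ, f ((η ^ g) ^ ((cu * v : (ZMod e)ˣ) : ZMod e).val)) ^ (φ n / φ e) := by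
        rw [(ZMod.unitsMap he).prod_comp_eq_prod_pow_of_surjective (ZMod.unitsMap_surjective he)
          (fun v => f ((η ^ g) ^ ((cu * v : (ZMod e)ˣ) : ZMod e).val)),
          ZMod.card_units_eq_totient, ZMod.card_units_eq_totient]
    _ = (∏ y ∈ primitiveRoots e K, f y) ^ (φ n / φ e) := by
        rw [hθ.prod_primitiveRoots_eq_prod_units]
        exact congrArg (· ^ _)
          (Equiv.prod_comp (Equiv.mulLeft cu) fun v => f ((η ^ g) ^ (v : ZMod e).val))

theorem eval_one_cyclotomic_eq_prod (hη : IsPrimitiveRoot η n) :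
    (cyclotomic n K).eval 1 = ∏ x ∈ primitiveRoots n K, (1 - x) := by
  simp [cyclotomic_eq_prod_X_sub_primitiveRoots hη, eval_prod]

theorem prod_primitiveRoots_pow_sub_one (hη : IsPrimitiveRoot η n) (hn : 2 < n) (m : ℕ) :
    ∏ x ∈ primitiveRoots n K, (x ^ m - 1) =
      (cyclotomic (n / n.gcd m) K).eval 1 ^ (φ n / φ (n / n.gcd m)) := by
  have hθ := hη.pow_of_dvd (Nat.gcd_pos_of_pos_left m (by omega)).ne' (Nat.gcd_dvd_left n m)
  simp_rw [← neg_sub (1 : K)]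
  rw [prod_neg, hη.card_primitiveRoots, (Nat.totient_even hn).neg_one_pow, one_mul,
    hη.prod_primitiveRoots_pow (by omega) (1 - ·) m, hθ.eval_one_cyclotomic_eq_prod]

end IsPrimitiveRoot

namespace Nat

variable {p a : ℕ}

theorem sum_divisors_prime_pow_totient_div (hp : p.Prime) (ha : ¬p ∣ a) (s : ℕ) :
    ∑ c ∈ (p ^ s).divisors, φ (p ^ s * a / c) = p ^ s * φ a := by
  have hcop (c : ℕ) (hc : c ∈ (p ^ s).divisors) : (p ^ s / c).Coprime a :=
    (Coprime.pow_left s (hp.coprime_iff_not_dvd.2 ha)).coprime_dvd_left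
      (div_dvd_of_dvd (dvd_of_mem_divisors hc))
  calc ∑ c ∈ (p ^ s).divisors, φ (p ^ s * a / c)
      = ∑ c ∈ (p ^ s).divisors, φ (p ^ s / c) * φ a := by
        refine sum_congr rfl fun c hc => ?_
        rw [Nat.mul_div_right_comm (dvd_of_mem_divisors hc), totient_mul (hcop c hc)]
    _ = p ^ s * φ a := by rw [← sum_mul, sum_div_divisors, sum_totient]

theorem totient_prime_pow_mul_div_totient (hp : p.Prime) (ha : ¬p ∣ a) {j : ℕ} (hj : j ≠ 0)
    (s : ℕ) : φ (p ^ j * (p ^ s * a)) / φ (p ^ j) = p ^ s * φ a := by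
  obtain ⟨i, rfl⟩ := exists_eq_succ_of_ne_zero hj
  have hcop : (p ^ (i + 1 + s)).Coprime a := Coprime.pow_left _ (hp.coprime_iff_not_dvd.2 ha)
  rw [← mul_assoc, ← pow_add, totient_mul hcop, add_right_comm, totient_prime_pow_succ hp,
    totient_prime_pow_succ hp, pow_add,
    show p ^ i * p ^ s * (p - 1) * φ a = p ^ i * (p - 1) * (p ^ s * φ a) by ring]
  exact Nat.mul_div_cancel_left _ (Nat.mul_pos (pow_pos hp.pos i) (Nat.sub_pos_of_lt hp.one_lt))

theorem eq_of_prod_divisors_eq {M : Type*} [CommMonoidWithZero M] [IsCancelMulZero M]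
    [Nontrivial M] {f g : ℕ → M} {N : ℕ} (hf : ∀ d, 0 < d → d < N → f d ≠ 0)
    (h : ∀ m, 0 < m → m < N → ∏ d ∈ m.divisors, f d = ∏ d ∈ m.divisors, g d) :
    ∀ m, 0 < m → m < N → f m = g m := by
  intro m
  induction m using Nat.strong_induction_on with
  | _ m ih =>
    intro hm hmN
    have hproper : ∏ d ∈ m.properDivisors, f d = ∏ d ∈ m.properDivisors, g d :=
      prod_congr rfl fun d hd => by
        obtain ⟨hdm, hlt⟩ := mem_properDivisors.1 hd
        exact ih d hlt (pos_of_dvd_of_pos hdm hm) (hlt.trans hmN)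
    have hne : ∏ d ∈ m.properDivisors, f d ≠ 0 := prod_ne_zero_iff.2 fun d hd => by
      obtain ⟨hdm, hlt⟩ := mem_properDivisors.1 hd
      exact hf d (pos_of_dvd_of_pos hdm hm) (hlt.trans hmN)
    have hprod := h m hm hmN
    rw [← cons_self_properDivisors hm.ne', prod_cons, prod_cons, ← hproper] at hprod
    exact mul_right_cancel₀ hne hprod

end Nat

theorem eval_one_cyclotomic_prime_pow_mul {R : Type*} [CommRing R] {p a j s c : ℕ}
    (hp : p.Prime) (ha : ¬p ∣ a) (hj : j ≠ 0) (hc : c ∣ p ^ s * a) :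
    (cyclotomic (p ^ j * c) R).eval 1 = if c ∣ p ^ s then (p : R) else 1 := by
  have : Fact p.Prime := ⟨hp⟩
  split_ifs with hcs
  · obtain ⟨i, -, rfl⟩ := (Nat.dvd_prime_pow hp).1 hcs
    obtain ⟨k, hk⟩ : ∃ k, j + i = k + 1 := ⟨j + i - 1, by omega⟩
    rw [← pow_add, hk, eval_one_cyclotomic_prime_pow]
  · refine eval_one_cyclotomic_not_prime_pow fun {q} hq k hqk => hcs ?_
    have hqp : q = p := (Nat.prime_dvd_prime_iff_eq hp hq).1
      (hp.dvd_of_dvd_pow (hqk ▸ dvd_mul_of_dvd_left (dvd_pow_self p hj) c)) |>.symm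
    subst hqp
    obtain ⟨i, -, rfl⟩ := (Nat.dvd_prime_pow hp).1 (Dvd.intro_left _ hqk.symm)
    exact (Nat.Coprime.pow_left i (hp.coprime_iff_not_dvd.2 ha)).dvd_of_dvd_mul_right hc

theorem prod_divisors_eval_one_cyclotomic_mul {R : Type*} [CommRing R] {e G : ℕ} (he : 1 < e)
    (hG : G ≠ 0) :
    ∏ c ∈ G.divisors, (cyclotomic (e * c) R).eval 1 ^ φ (G / c) =
      (cyclotomic e R).eval 1 ^ (φ (e * G) / φ e) := by
  by_cases hpp : IsPrimePow e
  · obtain ⟨p, j, hp, hj, rfl⟩ := hpp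
    rw [← Nat.prime_iff] at hp
    obtain ⟨s, a, ha, rfl⟩ := Nat.exists_eq_pow_mul_and_not_dvd hG p hp.ne_one
    have hdiv : (p ^ s * a).divisors.filter (· ∣ p ^ s) = (p ^ s).divisors := by
      ext c
      simp only [mem_filter, Nat.mem_divisors]
      exact ⟨fun h => ⟨h.2, pow_ne_zero _ hp.ne_zero⟩,
        fun h => ⟨⟨h.1.trans (dvd_mul_right _ _), hG⟩, h.1⟩⟩
    have hpj : (cyclotomic (p ^ j) R).eval 1 = p := by
      simpa using eval_one_cyclotomic_prime_pow_mul (R := R) hp ha hj.ne' (one_dvd (p ^ s * a))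
    rw [prod_congr rfl fun c hc => by
        rw [eval_one_cyclotomic_prime_pow_mul hp ha hj.ne' (Nat.dvd_of_mem_divisors hc)],
      hpj, Nat.totient_prime_pow_mul_div_totient hp ha hj.ne',
      ← Nat.sum_divisors_prime_pow_totient_div hp ha s]
    simp only [ite_pow, one_pow]
    rw [← prod_filter, hdiv, prod_pow_eq_pow_sum]
  · have hnot (c : ℕ) (hc : c ≠ 0) : (cyclotomic (e * c) R).eval 1 = 1 := by
      refine eval_one_cyclotomic_not_prime_pow fun {q} hq k hqk => hpp ?_
      obtain ⟨i, -, hei⟩ := (Nat.dvd_prime_pow hq).1 (Dvd.intro c hqk.symm)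
      refine ⟨q, i, hq.prime, Nat.pos_of_ne_zero ?_, hei.symm⟩
      rintro rfl
      rw [pow_zero] at hei
      omega
    have he1 : (cyclotomic e R).eval 1 = 1 := by simpa using hnot 1 one_ne_zero
    rw [he1, one_pow]
    exact prod_eq_one fun c hc => by rw [hnot c (Nat.pos_of_mem_divisors hc).ne', one_pow]

theorem prod_divisors_ite_eval_one_cyclotomic {R : Type*} [CommRing R] {n m : ℕ} (hm : 0 < m)
    (hmn : m < n) :
    ∏ d ∈ m.divisors, (if d ∣ n then (cyclotomic (n / d) R).eval 1 ^ φ d else 1) =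
      (cyclotomic (n / n.gcd m) R).eval 1 ^ (φ n / φ (n / n.gcd m)) := by
  set G := n.gcd m
  have hG : G ≠ 0 := (Nat.gcd_pos_of_pos_right n hm).ne'
  have hGn : G ∣ n := Nat.gcd_dvd_left n m
  have he : 1 < n / G := (Nat.lt_div_iff_mul_lt' hGn 1).2 <| by
    simpa using (Nat.le_of_dvd hm (Nat.gcd_dvd_right n m)).trans_lt hmn
  have hdivisors : m.divisors.filter (· ∣ n) = G.divisors := by
    ext d
    simp only [mem_filter, Nat.mem_divisors, Nat.dvd_gcd_iff, G]
    exact ⟨fun h => ⟨⟨h.2, h.1.1⟩, hG⟩, fun h => ⟨⟨h.1.2, hm.ne'⟩, h.1.1⟩⟩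
  have hquot (c : ℕ) (hc : c ∣ G) : n / (G / c) = n / G * c := by
    rw [← Nat.div_mul_cancel hGn, Nat.mul_div_assoc _ (Nat.div_dvd_of_dvd hc),
      Nat.div_div_self hc hG, Nat.mul_div_cancel _ (Nat.pos_of_ne_zero hG)]
  have hcore := prod_divisors_eval_one_cyclotomic_mul (R := R) he hG
  rw [Nat.div_mul_cancel hGn] at hcore
  rw [prod_ite, prod_const_one, mul_one, hdivisors, ← Nat.prod_div_divisors, ← hcore]
  exact prod_congr rfl fun c hc => by rw [hquot c (Nat.dvd_of_mem_divisors hc)]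

theorem IsPrimitiveRoot.prod_primitiveRoots_eval_cyclotomic {K : Type*} [CommRing K] [IsDomain K]
    [CharZero K] {η : K} {n : ℕ} (hη : IsPrimitiveRoot η n) (hn : 2 < n) {m : ℕ} (hm : 0 < m)
    (hmn : m < n) :
    ∏ x ∈ primitiveRoots n K, (cyclotomic m K).eval x =
      if m ∣ n then (cyclotomic (n / m) K).eval 1 ^ φ m else 1 := by
  apply Nat.eq_of_prod_divisors_eq (M := K) ?_ ?_ m hm hmn
  · intro d hd hdn
    refine prod_ne_zero_iff.2 fun x hx hx0 => hdn.ne ?_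
    exact ((isRoot_cyclotomic_iff_charZero hd).1 hx0).unique
      (isPrimitiveRoot_of_mem_primitiveRoots hx)
  · intro k hk hkn
    rw [prod_comm, prod_divisors_ite_eval_one_cyclotomic hk hkn,
      ← hη.prod_primitiveRoots_pow_sub_one hn]
    refine prod_congr rfl fun x _ => ?_
    rw [← eval_prod, prod_cyclotomic_eq_X_pow_sub_one hk]
    simp

theorem resultantAux_cyclotomic_left {n : ℕ} (hn : n ≠ 0) (g : ℂ[X]) :
    resultantAux (cyclotomic n ℂ) g = ∏ ζ ∈ primitiveRoots n ℂ, g.eval ζ := by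
  rw [resultantAux, cyclotomic_eq_prod_X_sub_primitiveRoots (Complex.isPrimitiveRoot_exp n hn),
    roots_prod_X_sub_C]
  rfl

theorem resultant_cyclotomic (n m : ℕ) (hm : 1 < m) (hmn : m < n) :
    (∀ p k : ℕ, p.Prime → 1 ≤ k → n = m * p ^ k →
      resultantAux (cyclotomic n ℂ) (cyclotomic m ℂ) = (p : ℂ) ^ m.totient) ∧
    ((¬ ∃ p k : ℕ, p.Prime ∧ 1 ≤ k ∧ n = m * p ^ k) →
      resultantAux (cyclotomic n ℂ) (cyclotomic m ℂ) = 1) := by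
  have hres : resultantAux (cyclotomic n ℂ) (cyclotomic m ℂ) =
      if m ∣ n then (cyclotomic (n / m) ℂ).eval 1 ^ φ m else 1 := by
    rw [resultantAux_cyclotomic_left (by omega)]
    exact (Complex.isPrimitiveRoot_exp n (by omega)).prod_primitiveRoots_eval_cyclotomic
      (by omega) (by omega) hmn
  refine ⟨fun p k hp hk hnmk => ?_, fun hne => ?_⟩
  · have : Fact p.Prime := ⟨hp⟩
    obtain ⟨k, rfl⟩ := Nat.exists_eq_add_of_le' hk
    rw [hres, if_pos ⟨_, hnmk⟩, hnmk, Nat.mul_div_cancel_left _ (by omega),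
      eval_one_cyclotomic_prime_pow]
  · rw [hres]
    split_ifs with hdvd
    · obtain ⟨q, rfl⟩ := hdvd
      rw [Nat.mul_div_cancel_left _ (by omega), eval_one_cyclotomic_not_prime_pow, one_pow]
      rintro p hp (_ | k) hpk
      · rw [pow_zero] at hpk
        subst hpk
        omega
      · exact hne ⟨p, k + 1, hp, by omega, by rw [hpk]⟩
    · rfl
end

section
/- Let n > m > 1 be integers and ζ_m a primitive m-th root of unity. Then the algebraic integer Φ_n(ζ_m) is a unit in the ring of integers ℤ[ζ_m] of ℚ(ζ_m) if and only if n/m is not a prime power (i.e., it is not the case that m | n and n/m = p^k for a prime p and k ≥ 1). -/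
open Polynomial Finset

namespace CycAux

lemma pow_congr {η : ℂ} {r : ℕ} (hη : η ^ r = 1) {a b : ℕ} (h : a ≡ b [MOD r]) :
    η ^ a = η ^ b := by
  have key : ∀ c : ℕ, η ^ c = η ^ (c % r) := by
    intro c
    conv_lhs => rw [← Nat.mod_add_div c r]
    rw [pow_add, pow_mul, hη, one_pow, mul_one]
  rw [key a, key b, h]

lemma coprime_of_mul_mod {w w' r : ℕ} (h : w * w' % r = 1) : w'.Coprime r := by
  have h2 : Nat.gcd w' r ∣ r := Nat.gcd_dvd_right _ _
  have h1 : Nat.gcd w' r ∣ w * w' := Dvd.dvd.mul_left (Nat.gcd_dvd_left _ _) w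
  have := (Nat.dvd_mod_iff h2).2 h1
  rw [h] at this
  exact Nat.dvd_one.mp this

lemma exists_coprime_modEq {t r : ℕ} (ht : t ∣ r) (hr : 0 < r) {u : ℕ} (hu : u.Coprime t) :
    ∃ w : ℕ, w.Coprime r ∧ w ≡ u [MOD t] := by
  have htpos : 0 < t := Nat.pos_of_dvd_of_pos ht hr
  haveI : NeZero r := ⟨hr.ne'⟩
  haveI : NeZero t := ⟨htpos.ne'⟩
  obtain ⟨W, hW⟩ := ZMod.unitsMap_surjective ht (ZMod.unitOfCoprime u hu)
  refine ⟨((W : ZMod r)).val, ZMod.val_coe_unit_coprime W, ?_⟩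
  have h1 : ((((W : ZMod r)).val : ℕ) : ZMod t) = (u : ZMod t) := by
    have h2 := congrArg (fun x : (ZMod t)ˣ => (x : ZMod t)) hW
    simp only [ZMod.unitsMap_def, Units.coe_map, MonoidHom.coe_coe] at h2
    rw [ZMod.natCast_val, ← ZMod.castHom_apply (h := ht) (R := ZMod t), h2,
      ZMod.coe_unitOfCoprime]
  exact (ZMod.natCast_eq_natCast_iff _ _ _).1 h1

lemma prod_pow_coprime_reindex {r : ℕ} (hr : 0 < r) {w : ℕ} (hw : w.Coprime r) (f : ℂ → ℂ) :
    ∏ η ∈ primitiveRoots r ℂ, f (η ^ w) = ∏ η ∈ primitiveRoots r ℂ, f η := by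
  rcases eq_or_lt_of_le (Nat.one_le_iff_ne_zero.2 hr.ne') with h1 | h1
  · rw [← h1]
    simp [IsPrimitiveRoot.primitiveRoots_one]
  · obtain ⟨w', -, hw'⟩ := Nat.exists_mul_mod_eq_one_of_coprime hw h1
    have hw'cop : w'.Coprime r := CycAux.coprime_of_mul_mod hw'
    have hmod : w * w' ≡ 1 [MOD r] := by
      unfold Nat.ModEq
      rw [hw', Nat.one_mod_eq_one.mpr h1.ne']
    refine Finset.prod_nbij' (fun η => η ^ w) (fun η => η ^ w') ?_ ?_ ?_ ?_ ?_
    · intro η hη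
      rw [mem_primitiveRoots hr] at hη ⊢
      exact hη.pow_of_coprime w hw
    · intro η hη
      rw [mem_primitiveRoots hr] at hη ⊢
      exact hη.pow_of_coprime w' hw'cop
    · intro η hη
      rw [mem_primitiveRoots hr] at hη
      show (η ^ w) ^ w' = η
      rw [← pow_mul, CycAux.pow_congr hη.pow_eq_one hmod, pow_one]
    · intro η hη
      rw [mem_primitiveRoots hr] at hη
      show (η ^ w') ^ w = η
      rw [← pow_mul, mul_comm w' w, CycAux.pow_congr hη.pow_eq_one hmod, pow_one]
    · intro η _
      rfl

lemma cyclotomic_eval_eq_prod {r : ℕ} (hr : 0 < r) (x : ℂ) :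
    (cyclotomic r ℂ).eval x = ∏ η ∈ primitiveRoots r ℂ, (x - η) := by
  rw [cyclotomic_eq_prod_X_sub_primitiveRoots (Complex.isPrimitiveRoot_exp r hr.ne'), eval_prod]
  simp

lemma abs_prod_nthRoots (d r : ℕ) (hd : 0 < d) (hr : 0 < r) :
    ‖∏ ξ ∈ nthRootsFinset d (1 : ℂ), (cyclotomic r ℂ).eval ξ‖ =
      ‖∏ η ∈ primitiveRoots r ℂ, (η ^ d - 1)‖ := by
  have h1 : ∏ ξ ∈ nthRootsFinset d (1 : ℂ), (cyclotomic r ℂ).eval ξ =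
      ∏ η ∈ primitiveRoots r ℂ, ∏ ξ ∈ nthRootsFinset d (1 : ℂ), (ξ - η) := by
    rw [← Finset.prod_comm]
    exact Finset.prod_congr rfl fun ξ _ => cyclotomic_eval_eq_prod hr ξ
  rw [h1, norm_prod, norm_prod]
  refine Finset.prod_congr rfl fun η _ => ?_
  have h2 : η ^ d - 1 = ∏ ξ ∈ nthRootsFinset d (1 : ℂ), (η - ξ) := by
    have h3 := X_pow_sub_one_eq_prod hd (Complex.isPrimitiveRoot_exp d hd.ne')
    have h4 := congrArg (Polynomial.eval η) h3
    simpa [eval_prod] using h4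
  rw [h2, norm_prod, norm_prod]
  exact Finset.prod_congr rfl fun ξ _ => by rw [norm_sub_rev]

lemma prod_nthRoots_eq (d : ℕ) (hd : 0 < d) (f : ℂ → ℂ) :
    ∏ ξ ∈ nthRootsFinset d (1 : ℂ), f ξ = ∏ e ∈ d.divisors, ∏ ξ ∈ primitiveRoots e ℂ, f ξ := by
  rw [IsPrimitiveRoot.nthRoots_one_eq_biUnion_primitiveRoots,
    Finset.prod_biUnion]
  intro i _ j _ hij
  exact IsPrimitiveRoot.disjoint hij

lemma prod_divisors_abs (r : ℕ) (hr : 0 < r) (s : ℕ) (hs : 0 < s) :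
    ∏ e ∈ s.divisors, ‖∏ ξ ∈ primitiveRoots e ℂ, (cyclotomic r ℂ).eval ξ‖
      = ‖∏ η ∈ primitiveRoots r ℂ, (η ^ s - 1)‖ := by
  rw [← abs_prod_nthRoots s r hs hr, prod_nthRoots_eq s hs, norm_prod]

lemma prod_pow_sub_one_gcd (d r : ℕ) (hd : 0 < d) (hr : 0 < r) :
    ∏ η ∈ primitiveRoots r ℂ, (η ^ d - 1) =
      ∏ η ∈ primitiveRoots r ℂ, (η ^ (Nat.gcd d r) - 1) := by
  set g := Nat.gcd d r with hg
  have hgpos : 0 < g := Nat.gcd_pos_of_pos_left _ hd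
  have hgr : g ∣ r := Nat.gcd_dvd_right d r
  have hgd : g ∣ d := Nat.gcd_dvd_left d r
  set t := r / g with htdef
  have hrt : r = g * t := (Nat.mul_div_cancel' hgr).symm
  by_cases ht1 : t ≤ 1
  · have ht1' : t = 1 := le_antisymm ht1 (Nat.one_le_iff_ne_zero.2 (by
      intro h0; rw [h0, mul_zero] at hrt; omega))
    have hrg : r = g := by rw [hrt, ht1', mul_one]
    have hrd : r ∣ d := hrg ▸ hgd
    refine Finset.prod_congr rfl fun η hη => ?_
    have hη' := isPrimitiveRoot_of_mem_primitiveRoots hη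
    obtain ⟨c, rfl⟩ := hrd
    rw [pow_mul, hη'.pow_eq_one, one_pow, ← hrg, hη'.pow_eq_one]
  · have ht : 1 < t := by omega
    have hcop : (d / g).Coprime t := Nat.coprime_div_gcd_div_gcd hgpos
    obtain ⟨u, -, hu⟩ := Nat.exists_mul_mod_eq_one_of_coprime hcop ht
    have hucop : u.Coprime t := CycAux.coprime_of_mul_mod hu
    obtain ⟨w, hwcop, hwmod⟩ := CycAux.exists_coprime_modEq
      (t := t) (r := r) ⟨g, by rw [hrt]; ring⟩ hr hucop
    have key : ∀ η ∈ primitiveRoots r ℂ, (η ^ w) ^ d = η ^ g := by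
      intro η hη
      have hη' := isPrimitiveRoot_of_mem_primitiveRoots hη
      rw [← pow_mul]
      apply CycAux.pow_congr hη'.pow_eq_one
      have h1 : w * (d / g) ≡ u * (d / g) [MOD t] := hwmod.mul_right _
      have h2 : u * (d / g) ≡ 1 [MOD t] := by
        unfold Nat.ModEq
        rw [mul_comm, hu, Nat.one_mod_eq_one.mpr ht.ne']
      have h3 : g * (w * (d / g)) ≡ g * 1 [MOD g * t] := (h1.trans h2).mul_left' g
      rw [mul_one] at h3
      have h4 : g * (w * (d / g)) = w * d := by
        rw [← mul_assoc, mul_comm g w, mul_assoc, Nat.mul_div_cancel' hgd]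
      rwa [h4, ← hrt] at h3
    calc ∏ η ∈ primitiveRoots r ℂ, (η ^ d - 1)
        = ∏ η ∈ primitiveRoots r ℂ, ((η ^ w) ^ d - 1) :=
          (prod_pow_coprime_reindex hr hwcop (fun z => z ^ d - 1)).symm
      _ = ∏ η ∈ primitiveRoots r ℂ, (η ^ g - 1) :=
          Finset.prod_congr rfl fun η hη => by rw [key η hη]

lemma abs_prod_pow_sub_one_eq_one {g t : ℕ} (hg : 0 < g) (ht : 1 < t)
    (h1 : ‖∏ θ ∈ primitiveRoots t ℂ, (θ - 1)‖ = 1) :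
    ‖∏ η ∈ primitiveRoots (g * t) ℂ, (η ^ g - 1)‖ = 1 := by
  classical
  set n := g * t with hn
  have htpos : 0 < t := by omega
  have hnpos : 0 < n := Nat.mul_pos hg htpos
  have hn1 : 1 < n := by
    calc 1 < t := ht
    _ = 1 * t := (one_mul t).symm
    _ ≤ g * t := Nat.mul_le_mul_right t hg
  have htdvd : t ∣ n := ⟨g, by rw [hn]; ring⟩
  haveI : NeZero t := ⟨htpos.ne'⟩
  set ω := Complex.exp (2 * Real.pi * Complex.I / n) with hω
  have hωprim : IsPrimitiveRoot ω n := Complex.isPrimitiveRoot_exp n hnpos.ne'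
  have himg : (primitiveRoots n ℂ).image (fun z => z ^ g) = primitiveRoots t ℂ := by
    apply Finset.Subset.antisymm
    · intro θ hθ
      simp only [Finset.mem_image] at hθ
      obtain ⟨η, hη, rfl⟩ := hθ
      rw [mem_primitiveRoots htpos]
      exact IsPrimitiveRoot.pow hnpos (isPrimitiveRoot_of_mem_primitiveRoots hη) hn
    · intro θ hθ
      have hθ' := isPrimitiveRoot_of_mem_primitiveRoots hθ
      have hbase : IsPrimitiveRoot (ω ^ g) t := IsPrimitiveRoot.pow hnpos hωprim hn
      obtain ⟨i, _, hicop, hie⟩ := (hbase.isPrimitiveRoot_iff).1 hθ'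
      obtain ⟨w, hwcop, hwmod⟩ := CycAux.exists_coprime_modEq htdvd hnpos hicop
      refine Finset.mem_image.2 ⟨ω ^ w, ?_, ?_⟩
      · rw [mem_primitiveRoots hnpos]; exact hωprim.pow_of_coprime w hwcop
      · show (ω ^ w) ^ g = θ
        rw [← pow_mul, mul_comm w g, pow_mul,
          CycAux.pow_congr hbase.pow_eq_one hwmod]
        exact hie
  have hfib : ∀ θ ∈ primitiveRoots t ℂ, ∀ θ' ∈ primitiveRoots t ℂ,
      ((primitiveRoots n ℂ).filter (fun η => η ^ g = θ)).card =
      ((primitiveRoots n ℂ).filter (fun η => η ^ g = θ')).card := by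
    intro θ hθ θ' hθ'
    have hθp := isPrimitiveRoot_of_mem_primitiveRoots hθ
    have hθ'p := isPrimitiveRoot_of_mem_primitiveRoots hθ'
    obtain ⟨i, _, hicop, hie⟩ := (hθp.isPrimitiveRoot_iff).1 hθ'p
    obtain ⟨w, hwcop, hwmod⟩ := CycAux.exists_coprime_modEq htdvd hnpos hicop
    obtain ⟨w', -, hw'⟩ := Nat.exists_mul_mod_eq_one_of_coprime hwcop hn1
    have hw'cop : w'.Coprime n := CycAux.coprime_of_mul_mod hw'
    have hmodn : w * w' ≡ 1 [MOD n] := by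
      unfold Nat.ModEq; rw [hw', Nat.one_mod_eq_one.mpr hn1.ne']
    have hmodt : w * w' ≡ 1 [MOD t] := hmodn.of_dvd htdvd
    have hθw : θ ^ w = θ' := by
      rw [CycAux.pow_congr hθp.pow_eq_one hwmod]; exact hie
    apply Finset.card_nbij' (fun η => η ^ w) (fun η => η ^ w')
    · intro η hη
      simp only [Finset.mem_coe, Finset.mem_filter] at hη ⊢
      obtain ⟨hηmem, hηg⟩ := hη
      have hηp := isPrimitiveRoot_of_mem_primitiveRoots hηmem
      refine ⟨(mem_primitiveRoots hnpos).2 (hηp.pow_of_coprime w hwcop), ?_⟩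
      show (η ^ w) ^ g = θ'
      rw [← pow_mul, mul_comm w g, pow_mul, hηg, hθw]
    · intro η hη
      simp only [Finset.mem_coe, Finset.mem_filter] at hη ⊢
      obtain ⟨hηmem, hηg⟩ := hη
      have hηp := isPrimitiveRoot_of_mem_primitiveRoots hηmem
      refine ⟨(mem_primitiveRoots hnpos).2 (hηp.pow_of_coprime w' hw'cop), ?_⟩
      show (η ^ w') ^ g = θ
      rw [← pow_mul, mul_comm w' g, pow_mul, hηg, ← hθw, ← pow_mul,
        CycAux.pow_congr hθp.pow_eq_one hmodt, pow_one]
    · intro η hη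
      simp only [Finset.mem_coe, Finset.mem_filter] at hη
      have hηp := isPrimitiveRoot_of_mem_primitiveRoots hη.1
      show (η ^ w) ^ w' = η
      rw [← pow_mul, CycAux.pow_congr hηp.pow_eq_one hmodn, pow_one]
    · intro η hη
      simp only [Finset.mem_coe, Finset.mem_filter] at hη
      have hηp := isPrimitiveRoot_of_mem_primitiveRoots hη.1
      show (η ^ w') ^ w = η
      rw [← pow_mul, mul_comm w' w, CycAux.pow_congr hηp.pow_eq_one hmodn, pow_one]
  have hθ0 : ω ^ g ∈ primitiveRoots t ℂ :=
    (mem_primitiveRoots htpos).2 (IsPrimitiveRoot.pow hnpos hωprim hn)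
  set c := ((primitiveRoots n ℂ).filter (fun η => η ^ g = ω ^ g)).card with hc
  have hcomp : ∏ η ∈ primitiveRoots n ℂ, (η ^ g - 1) =
      ∏ θ ∈ primitiveRoots t ℂ, (θ - 1) ^ c := by
    have h2 := Finset.prod_comp (s := primitiveRoots n ℂ) (fun z : ℂ => z - 1)
      (fun η : ℂ => η ^ g)
    rw [himg] at h2
    rw [h2]
    exact Finset.prod_congr rfl fun θ hθ => by rw [hfib θ hθ (ω ^ g) hθ0]
  rw [hcomp, norm_prod]
  simp_rw [norm_pow]
  rw [Finset.prod_pow, ← norm_prod, h1]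
  exact one_pow c

lemma cyclotomic_eval_ne_zero {r e : ℕ} (hr : 0 < r) (her : e ≠ r) {ξ : ℂ}
    (hξ : ξ ∈ primitiveRoots e ℂ) : (cyclotomic r ℂ).eval ξ ≠ 0 := by
  haveI : NeZero ((r : ℂ)) := ⟨by exact_mod_cast hr.ne'⟩
  intro h0
  have hroot : IsPrimitiveRoot ξ r := (isRoot_cyclotomic_iff (R := ℂ)).1 h0
  exact her ((isPrimitiveRoot_of_mem_primitiveRoots hξ).unique hroot)

lemma abs_prod_cyclotomic_eq_one (r : ℕ) (hr : 0 < r) :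
    ∀ d, 0 < d → ¬ d ∣ r → ¬ r ∣ d →
    ‖∏ ξ ∈ primitiveRoots d ℂ, (cyclotomic r ℂ).eval ξ‖ = 1 := by
  intro d
  induction d using Nat.strong_induction_on with
  | _ d IH =>
  intro hd hdr hrd
  classical
  set Q : ℕ → ℝ := fun e => ‖∏ ξ ∈ primitiveRoots e ℂ, (cyclotomic r ℂ).eval ξ‖
    with hQ
  have hQne : ∀ e, e ≠ r → Q e ≠ 0 := by
    intro e her
    simp only [hQ, ne_eq, norm_eq_zero]
    exact Finset.prod_ne_zero_iff.2 fun ξ hξ => cyclotomic_eval_ne_zero hr her hξ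
  have hgpos : 0 < Nat.gcd d r := Nat.gcd_pos_of_pos_left _ hd
  have key2 : ∏ e ∈ d.divisors, Q e = ∏ e ∈ (Nat.gcd d r).divisors, Q e := by
    rw [hQ]
    rw [prod_divisors_abs r hr d hd, prod_divisors_abs r hr _ hgpos,
      prod_pow_sub_one_gcd d r hd hr]
  have hsplit : (Nat.gcd d r).divisors = d.divisors.filter (· ∣ r) := by
    ext e
    simp only [Nat.mem_divisors, Finset.mem_filter, Nat.dvd_gcd_iff]
    constructor
    · rintro ⟨⟨h1, h2⟩, -⟩
      exact ⟨⟨h1, hd.ne'⟩, h2⟩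
    · rintro ⟨⟨h1, -⟩, h2⟩
      exact ⟨⟨h1, h2⟩, hgpos.ne'⟩
  rw [hsplit, ← Finset.prod_filter_mul_prod_filter_not d.divisors (· ∣ r) Q] at key2
  have hfilter_ne : ∏ e ∈ d.divisors.filter (· ∣ r), Q e ≠ 0 := by
    apply Finset.prod_ne_zero_iff.2
    intro e he
    simp only [Finset.mem_filter, Nat.mem_divisors] at he
    apply hQne
    intro hrfl
    exact hrd (by rw [← hrfl]; exact he.1.1)
  have hrest : ∏ e ∈ d.divisors.filter (fun e => ¬ e ∣ r), Q e = 1 := by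
    apply mul_left_cancel₀ hfilter_ne
    rw [mul_one]
    exact key2
  have hd_mem : d ∈ d.divisors.filter (fun e => ¬ e ∣ r) := by
    simp [Nat.mem_divisors, hd.ne', hdr]
  rw [← Finset.mul_prod_erase _ _ hd_mem] at hrest
  have hothers : ∏ e ∈ (d.divisors.filter (fun e => ¬ e ∣ r)).erase d, Q e = 1 := by
    apply Finset.prod_eq_one
    intro e he
    have hne := Finset.ne_of_mem_erase he
    have he' := Finset.mem_of_mem_erase he
    simp only [Finset.mem_filter, Nat.mem_divisors] at he'
    have hepos : 0 < e := Nat.pos_of_dvd_of_pos he'.1.1 hd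
    have helt : e < d := Nat.lt_of_le_of_ne (Nat.le_of_dvd hd he'.1.1) hne
    apply IH e helt hepos he'.2
    intro hre
    exact hrd (hre.trans he'.1.1)
  rw [hothers, mul_one] at hrest
  exact hrest

lemma abs_prod_cyclotomic_eq_one_of_dvd (m n : ℕ) (h0 : 0 < m) (hlt : m < n) (hdvd : m ∣ n)
    (hpp : ¬ IsPrimePow (n / m)) :
    ∀ d, d ∣ m → ‖∏ ξ ∈ primitiveRoots d ℂ, (cyclotomic n ℂ).eval ξ‖ = 1 := by
  have hn : 0 < n := lt_trans h0 hlt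
  intro d
  induction d using Nat.strong_induction_on with
  | _ d IH =>
  intro hdm
  classical
  have hd : 0 < d := Nat.pos_of_dvd_of_pos hdm h0
  have hdn : d ∣ n := hdm.trans hdvd
  have hdltn : d < n := lt_of_le_of_lt (Nat.le_of_dvd h0 hdm) hlt
  have htpos : 1 < n / d := by
    obtain ⟨c, rfl⟩ := hdn
    rw [Nat.mul_div_cancel_left _ hd]
    by_contra hc
    interval_cases c <;> omega
  have hppd : ¬ IsPrimePow (n / d) := by
    intro hcon
    apply hpp
    have h1 : n / m ∣ n / d := by
      obtain ⟨e, he⟩ := hdm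
      obtain ⟨q, hq⟩ := hdvd
      have h3 : n / d = e * q := by
        rw [hq, he, mul_assoc, Nat.mul_div_cancel_left _ hd]
      have h4 : n / m = q := by rw [hq, Nat.mul_div_cancel_left _ h0]
      rw [h3, h4]
      exact ⟨e, mul_comm e q⟩
    refine hcon.dvd h1 ?_
    have : 1 < n / m := by
      obtain ⟨q, rfl⟩ := hdvd
      rw [Nat.mul_div_cancel_left _ h0]
      by_contra hc
      interval_cases q <;> omega
    omega
  set Q : ℕ → ℝ := fun e => ‖∏ ξ ∈ primitiveRoots e ℂ, (cyclotomic n ℂ).eval ξ‖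
    with hQ
  have hQne : ∀ e, e ≠ n → Q e ≠ 0 := by
    intro e her
    simp only [hQ, ne_eq, norm_eq_zero]
    exact Finset.prod_ne_zero_iff.2 fun ξ hξ => cyclotomic_eval_ne_zero hn her hξ
  have hcyc1 : (cyclotomic (n / d) ℂ).eval 1 = 1 := by
    apply eval_one_cyclotomic_not_prime_pow
    intro p hp k hk
    rcases Nat.eq_zero_or_pos k with rfl | hkpos
    · rw [pow_zero] at hk; omega
    · exact hppd ((isPrimePow_nat_iff _).2 ⟨p, k, hp, hkpos, hk⟩)
  have habs1 : ‖∏ θ ∈ primitiveRoots (n / d) ℂ, (θ - 1)‖ = 1 := by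
    have h2 : (cyclotomic (n / d) ℂ).eval 1 =
        ∏ θ ∈ primitiveRoots (n / d) ℂ, ((1 : ℂ) - θ) :=
      cyclotomic_eval_eq_prod (by omega) 1
    have h3 : ‖∏ θ ∈ primitiveRoots (n / d) ℂ, ((1 : ℂ) - θ)‖ = 1 := by
      rw [← h2, hcyc1, norm_one]
    rw [norm_prod] at h3 ⊢
    rw [← h3]
    exact Finset.prod_congr rfl fun θ _ => by rw [norm_sub_rev]
  have key : ∏ e ∈ d.divisors, Q e = 1 := by
    rw [hQ, prod_divisors_abs n hn d hd]
    have hrw : n = d * (n / d) := (Nat.mul_div_cancel' hdn).symm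
    rw [show (∏ η ∈ primitiveRoots n ℂ, (η ^ d - 1)) =
        ∏ η ∈ primitiveRoots (d * (n / d)) ℂ, (η ^ d - 1) by rw [← hrw]]
    exact abs_prod_pow_sub_one_eq_one hd htpos habs1
  have hd_mem : d ∈ d.divisors := Nat.mem_divisors_self d hd.ne'
  rw [← Finset.mul_prod_erase _ _ hd_mem] at key
  have hothers : ∏ e ∈ d.divisors.erase d, Q e = 1 := by
    apply Finset.prod_eq_one
    intro e he
    have hne := Finset.ne_of_mem_erase he
    have he' := Finset.mem_of_mem_erase he
    rw [Nat.mem_divisors] at he'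
    have helt : e < d := Nat.lt_of_le_of_ne (Nat.le_of_dvd hd he'.1) hne
    exact IH e helt (he'.1.trans hdm)
  rw [hothers, mul_one] at key
  exact key

lemma cyclotomic_dvd_pow_mul (m p : ℕ) [hp : Fact p.Prime] (k : ℕ) :
    cyclotomic m (ZMod p) ∣ cyclotomic (m * p ^ k) (ZMod p) := by
  induction k with
  | zero => simp
  | succ j ih =>
    have heq : m * p ^ (j + 1) = (m * p ^ j) * p := by ring
    rw [heq]
    refine ih.trans ?_
    by_cases hdvd : p ∣ m * p ^ j
    · rw [cyclotomic_mul_prime_dvd_eq_pow _ hdvd]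
      exact dvd_pow_self _ hp.out.pos.ne'
    · rw [cyclotomic_mul_prime_eq_pow_of_not_dvd _ hdvd]
      exact dvd_pow_self _ (by have := hp.out.two_le; omega)

lemma not_unit_of_eq (m p k : ℕ) (hm : 1 < m) (hp : p.Prime) (_hk : 1 ≤ k) (ζ : ℂ)
    (hζ : IsPrimitiveRoot ζ m) :
    ¬ ∃ β ∈ Algebra.adjoin ℤ ({ζ} : Set ℂ), (cyclotomic (m * p ^ k) ℂ).eval ζ * β = 1 := by
  rintro ⟨β, hβmem, hβ⟩
  haveI : Fact p.Prime := ⟨hp⟩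
  have hζint : IsIntegral ℤ ζ := hζ.isIntegral (by omega)
  rw [Algebra.adjoin_singleton_eq_range_aeval] at hβmem
  obtain ⟨B, hB⟩ := hβmem
  have heval : aeval ζ (cyclotomic (m * p ^ k) ℤ * B - 1 : ℤ[X]) = 0 := by
    have h1 : aeval ζ (cyclotomic (m * p ^ k) ℤ) = (cyclotomic (m * p ^ k) ℂ).eval ζ := by
      rw [aeval_def, eval₂_eq_eval_map, map_cyclotomic]
    have hB' : aeval ζ B = β := hB
    rw [map_sub, map_mul, map_one, h1, hB', hβ, sub_self]
  have hdvd : cyclotomic m ℤ ∣ cyclotomic (m * p ^ k) ℤ * B - 1 := by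
    rw [cyclotomic_eq_minpoly hζ (by omega)]
    exact minpoly.isIntegrallyClosed_dvd hζint heval
  have hdvd2 : cyclotomic m (ZMod p) ∣
      cyclotomic (m * p ^ k) (ZMod p) * (B.map (Int.castRingHom (ZMod p))) - 1 := by
    have h2 := Polynomial.map_dvd (Int.castRingHom (ZMod p)) hdvd
    simpa only [Polynomial.map_sub, Polynomial.map_mul, Polynomial.map_one,
      map_cyclotomic] using h2
  have hdvd3 : cyclotomic m (ZMod p) ∣
      cyclotomic (m * p ^ k) (ZMod p) * (B.map (Int.castRingHom (ZMod p))) :=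
    (cyclotomic_dvd_pow_mul m p k).mul_right _
  have hone : cyclotomic m (ZMod p) ∣ 1 := by
    have h3 := dvd_sub hdvd3 hdvd2
    rwa [sub_sub_cancel] at h3
  have hu := isUnit_of_dvd_one hone
  have hdeg := degree_eq_zero_of_isUnit hu
  rw [degree_cyclotomic] at hdeg
  have htot : 0 < Nat.totient m := Nat.totient_pos.2 (by omega)
  simp only [Nat.cast_eq_zero] at hdeg
  omega

lemma eval_mem_adjoin {msize : ℕ} (hms : 0 < msize) {ζ : ℂ} (hζ : IsPrimitiveRoot ζ msize)
    {ξ : ℂ} (hξ : ξ ∈ primitiveRoots msize ℂ) (n : ℕ) :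
    (cyclotomic n ℂ).eval ξ ∈ Algebra.adjoin ℤ ({ζ} : Set ℂ) := by
  haveI : NeZero msize := ⟨hms.ne'⟩
  obtain ⟨i, _, hicop, hie⟩ :=
    (hζ.isPrimitiveRoot_iff).1 (isPrimitiveRoot_of_mem_primitiveRoots hξ)
  rw [← hie]
  have hmem : ζ ^ i ∈ Algebra.adjoin ℤ ({ζ} : Set ℂ) :=
    pow_mem (Algebra.self_mem_adjoin_singleton ℤ ζ) i
  have h1 : (cyclotomic n ℂ).eval (ζ ^ i) = aeval (ζ ^ i) (cyclotomic n ℤ) := by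
    rw [aeval_def, eval₂_eq_eval_map, map_cyclotomic]
  rw [h1]
  set a : Algebra.adjoin ℤ ({ζ} : Set ℂ) := ⟨ζ ^ i, hmem⟩ with ha
  have h2 : aeval ((a : ℂ)) (cyclotomic n ℤ) = ((aeval a (cyclotomic n ℤ) : _) : ℂ) :=
    (aeval_subalgebra_coe (cyclotomic n ℤ) _ a).symm
  rw [show (ζ ^ i) = (a : ℂ) from rfl, h2]
  exact (aeval a (cyclotomic n ℤ)).2

lemma conj_cyclotomic_eval (n : ℕ) (x : ℂ) :
    (starRingEnd ℂ) ((cyclotomic n ℂ).eval x) =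
      (cyclotomic n ℂ).eval ((starRingEnd ℂ) x) := by
  have h1 : cyclotomic n ℂ = (cyclotomic n ℤ).map (Int.castRingHom ℂ) :=
    (map_cyclotomic_int n ℂ).symm
  rw [h1, eval_map, eval_map, hom_eval₂]
  congr 1
  exact Subsingleton.elim _ _

end CycAux


theorem cyclotomic_eval_primitiveRoot_isUnit_iff (n m : ℕ) (hm : 1 < m) (hmn : m < n)
    (ζ : ℂ) (hζ : IsPrimitiveRoot ζ m) :
    (∃ β ∈ Algebra.adjoin ℤ ({ζ} : Set ℂ), (cyclotomic n ℂ).eval ζ * β = 1) ↔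
      ¬ ∃ p k : ℕ, p.Prime ∧ 1 ≤ k ∧ n = m * p ^ k := by
  constructor
  · rintro hβ ⟨p, k, hp, hk, rfl⟩
    exact CycAux.not_unit_of_eq m p k hm hp hk ζ hζ hβ
  · intro h
    have h0m : 0 < m := by omega
    have hζmem : ζ ∈ primitiveRoots m ℂ := (mem_primitiveRoots h0m).2 hζ
    set M := ∏ ξ ∈ primitiveRoots m ℂ, (cyclotomic n ℂ).eval ξ with hM
    have habs : ‖M‖ = 1 := by
      by_cases hdvd : m ∣ n
      · refine CycAux.abs_prod_cyclotomic_eq_one_of_dvd m n h0m hmn hdvd ?_ m dvd_rfl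
        rintro ⟨p, k, hp', hk', hpk⟩
        refine h ⟨p, k, Nat.prime_iff.2 hp', hk', ?_⟩
        rw [← Nat.mul_div_cancel' hdvd, hpk]
      · refine CycAux.abs_prod_cyclotomic_eq_one n (by omega) m h0m hdvd ?_
        intro hc
        exact absurd (Nat.le_of_dvd h0m hc) (by omega)
    have hMreal : (starRingEnd ℂ) M = M := by
      rw [hM, map_prod]
      have hstep : ∀ ξ ∈ primitiveRoots m ℂ,
          (starRingEnd ℂ) ((cyclotomic n ℂ).eval ξ) =
            (cyclotomic n ℂ).eval ((starRingEnd ℂ) ξ) :=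
        fun ξ _ => CycAux.conj_cyclotomic_eval n ξ
      rw [Finset.prod_congr rfl hstep]
      refine Finset.prod_nbij' (fun ξ => (starRingEnd ℂ) ξ) (fun ξ => (starRingEnd ℂ) ξ)
        ?_ ?_ ?_ ?_ ?_
      · intro ξ hξ
        rw [mem_primitiveRoots h0m] at hξ ⊢
        exact hξ.map_of_injective (starRingEnd ℂ).injective
      · intro ξ hξ
        rw [mem_primitiveRoots h0m] at hξ ⊢
        exact hξ.map_of_injective (starRingEnd ℂ).injective
      · intro ξ _; exact Complex.conj_conj ξ
      · intro ξ _; exact Complex.conj_conj ξ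
      · intro ξ _; rfl
    have hMeq : ((M.re : ℝ) : ℂ) = M := Complex.conj_eq_iff_re.1 hMreal
    have hre : |M.re| = 1 := by
      rw [← hMeq, Complex.norm_real, Real.norm_eq_abs] at habs
      exact habs
    have hM1 : M = 1 ∨ M = -1 := by
      rcases (abs_eq (by norm_num : (0:ℝ) ≤ 1)).1 hre with h1 | h1
      · left; rw [← hMeq, h1]; norm_num
      · right; rw [← hMeq, h1]; norm_num
    refine ⟨M * ∏ ξ ∈ (primitiveRoots m ℂ).erase ζ, (cyclotomic n ℂ).eval ξ, ?_, ?_⟩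
    · apply Subalgebra.mul_mem
      · rw [hM]
        exact Subalgebra.prod_mem _ fun ξ hξ => CycAux.eval_mem_adjoin h0m hζ hξ n
      · exact Subalgebra.prod_mem _ fun ξ hξ =>
          CycAux.eval_mem_adjoin h0m hζ (Finset.mem_of_mem_erase hξ) n
    · have hfac : (cyclotomic n ℂ).eval ζ *
          ∏ ξ ∈ (primitiveRoots m ℂ).erase ζ, (cyclotomic n ℂ).eval ξ = M :=
        Finset.mul_prod_erase (primitiveRoots m ℂ) (fun ξ => (cyclotomic n ℂ).eval ξ) hζmem
      calc (cyclotomic n ℂ).eval ζ *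
            (M * ∏ ξ ∈ (primitiveRoots m ℂ).erase ζ, (cyclotomic n ℂ).eval ξ)
          = M * ((cyclotomic n ℂ).eval ζ *
              ∏ ξ ∈ (primitiveRoots m ℂ).erase ζ, (cyclotomic n ℂ).eval ξ) := by ring
        _ = M * M := by rw [hfac]
        _ = 1 := by rcases hM1 with h1 | h1 <;> rw [h1] <;> norm_num
end

section
/- Let n ≥ 2 and let ξ be a primitive m-th root of unity with m not equal to n. Then Φ_n(ξ) is a nonzero real number if and only if m divides φ(n). -/
/-!
For `n ≥ 2` the cyclotomic polynomial is self-reciprocal, `Φₙ(x) = x ^ φ(n) Φₙ(x⁻¹)`: its roots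
are closed under inversion and their product is `Φₙ(0) = 1`. On the unit circle `x⁻¹ = conj x`,
and `Φₙ` has real coefficients, so `Φₙ(ξ) = ξ ^ φ(n) · conj Φₙ(ξ)`. As `Φₙ(ξ) ≠ 0` for `m ≠ n`,
it is real exactly when `ξ ^ φ(n) = 1`, i.e. when `m ∣ φ(n)`.
-/

open Polynomial Complex Finset ComplexConjugate

theorem IsPrimitiveRoot.prod_neg_primitiveRoots {R : Type*} [CommRing R] [IsDomain R] {n : ℕ}
    (hn : 2 ≤ n) {ζ : R} (hζ : IsPrimitiveRoot ζ n) :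
    ∏ μ ∈ primitiveRoots n R, -μ = 1 := by
  have h := cyclotomic_coeff_zero R (n := n) (by omega)
  rw [coeff_zero_eq_eval_zero, cyclotomic_eq_prod_X_sub_primitiveRoots hζ, eval_prod] at h
  simpa using h

theorem prod_primitiveRoots_comp_inv {K M : Type*} [Field K] [CommMonoid M] (n : ℕ)
    (f : K → M) : ∏ μ ∈ primitiveRoots n K, f μ⁻¹ = ∏ μ ∈ primitiveRoots n K, f μ := by
  rcases n.eq_zero_or_pos with rfl | hn
  · simp
  refine prod_nbij' (·⁻¹) (·⁻¹) ?_ ?_ (fun _ _ ↦ inv_inv _) (fun _ _ ↦ inv_inv _) (fun _ _ ↦ rfl)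
  all_goals
    intro μ hμ
    simpa [mem_primitiveRoots hn, IsPrimitiveRoot.inv_iff] using hμ

theorem IsPrimitiveRoot.cyclotomic_eval_eq_pow_totient_mul_eval_inv {K : Type*} [Field K]
    {n : ℕ} (hn : 2 ≤ n) {ζ : K} (hζ : IsPrimitiveRoot ζ n) {x : K} (hx : x ≠ 0) :
    (cyclotomic n K).eval x = x ^ n.totient * (cyclotomic n K).eval x⁻¹ := by
  simp only [cyclotomic_eq_prod_X_sub_primitiveRoots hζ, eval_prod, eval_sub, eval_X, eval_C]
  have hμ0 : ∀ μ ∈ primitiveRoots n K, μ ≠ 0 := fun μ hμ ↦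
    ((mem_primitiveRoots (by omega)).mp hμ).ne_zero (by omega)
  calc ∏ μ ∈ primitiveRoots n K, (x - μ)
      = ∏ μ ∈ primitiveRoots n K, -μ * (x * (x⁻¹ - μ⁻¹)) :=
        prod_congr rfl fun μ hμ ↦ by field_simp [hμ0 μ hμ]; ring
    _ = x ^ n.totient * ∏ μ ∈ primitiveRoots n K, (x⁻¹ - μ⁻¹) := by
        rw [prod_mul_distrib, hζ.prod_neg_primitiveRoots hn, one_mul, prod_mul_distrib,
          prod_const, hζ.card_primitiveRoots]
    _ = x ^ n.totient * ∏ μ ∈ primitiveRoots n K, (x⁻¹ - μ) := by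
        rw [prod_primitiveRoots_comp_inv n (x⁻¹ - ·)]

theorem pow_totient_mul_conj_cyclotomic_eval {n : ℕ} (hn : 2 ≤ n) {ξ : ℂ} (hξ : ‖ξ‖ = 1) :
    ξ ^ n.totient * conj ((cyclotomic n ℂ).eval ξ) = (cyclotomic n ℂ).eval ξ := by
  have hξ0 : ξ ≠ 0 := norm_ne_zero_iff.mp (by simp [hξ])
  rw [← cyclotomic.eval_apply, ← inv_eq_conj hξ,
    ← (isPrimitiveRoot_exp n (by omega)).cyclotomic_eval_eq_pow_totient_mul_eval_inv hn hξ0]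

theorem cyclotomic_eval_real_iff (n m : ℕ) (hn : 2 ≤ n) (hm : 1 ≤ m) (hmn : m ≠ n)
    (ξ : ℂ) (hξ : IsPrimitiveRoot ξ m) :
    ((cyclotomic n ℂ).eval ξ ≠ 0 ∧ ((cyclotomic n ℂ).eval ξ).im = 0) ↔
      m ∣ n.totient := by
  have : NeZero (n : ℂ) := ⟨by exact_mod_cast (show n ≠ 0 by omega)⟩
  have hA : (cyclotomic n ℂ).eval ξ ≠ 0 := fun h ↦ hmn (hξ.unique (isRoot_cyclotomic_iff.mp h))
  have key := pow_totient_mul_conj_cyclotomic_eval hn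
    (norm_eq_one_of_pow_eq_one hξ.pow_eq_one (by omega))
  rw [← hξ.pow_eq_one_iff_dvd, ← conj_eq_iff_im]
  constructor
  · rintro ⟨-, hreal⟩
    rw [hreal] at key
    exact mul_right_cancel₀ hA (key.trans (one_mul _).symm)
  · intro hpow
    rw [hpow, one_mul] at key
    exact ⟨hA, key⟩
end

section
/- Let p be a prime with p ≡ -1 (mod m), k ≥ 1, and ξ a primitive m-th root of unity with m > 1. Then Φ_{p^k}(ξ) = -ξ^{(-1)^k}, i.e., Φ_{p^k}(ξ) = -ξ if k is even and -ξ^{-1} if k is odd. -/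
/-! Write `ε = (-1)^n`. Since `p ≡ -1 (mod m)`, a primitive `m`-th root of unity `ξ` satisfies
`ξ^(p^n) = ξ^ε` and `ξ^(p^(n+1)) = ξ^(-ε)`, so evaluating
`Φ_{p^(n+1)} · (X^(p^n) - 1) = X^(p^(n+1)) - 1` at `ξ` gives
`Φ_{p^(n+1)}(ξ) (ξ^ε - 1) = ξ^(-ε) - 1 = -ξ^(-ε) (ξ^ε - 1)`, and `ξ^ε ≠ 1` because `m > 1`. -/

open Polynomial

namespace IsPrimitiveRoot

theorem zpow_eq_zpow_of_modEq {G₀ : Type*} [CommGroupWithZero G₀] {ξ : G₀} {m : ℕ}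
    (hξ : IsPrimitiveRoot ξ m) {a b : ℤ} (h : a ≡ b [ZMOD m]) : ξ ^ a = ξ ^ b := by
  rcases Nat.eq_zero_or_pos m with rfl | hm
  · rw [Int.ModEq, Nat.cast_zero, Int.emod_zero, Int.emod_zero] at h
    rw [h]
  have hξ0 : ξ ≠ 0 := hξ.ne_zero hm.ne'
  have hba : ξ ^ (b - a) = 1 := (hξ.zpow_eq_one_iff_dvd _).2 h.dvd
  calc ξ ^ a = ξ ^ a * ξ ^ (b - a) := by rw [hba, mul_one]
    _ = ξ ^ b := by rw [← zpow_add₀ hξ0, add_sub_cancel]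

theorem zpow_neg_one_pow_ne_one {G₀ : Type*} [CommGroupWithZero G₀] {ξ : G₀} {m : ℕ}
    (hξ : IsPrimitiveRoot ξ m) (hm : 1 < m) (n : ℕ) : ξ ^ ((-1 : ℤ) ^ n) ≠ 1 := by
  rw [Ne, hξ.zpow_eq_one_iff_dvd]
  intro hdvd
  have := Int.isUnit_iff_natAbs_eq.1 (isUnit_of_dvd_unit hdvd ((isUnit_neg_one).pow n))
  omega

end IsPrimitiveRoot

theorem eval_cyclotomic_prime_pow_succ_of_modEq_neg_one {K : Type*} [Field K] {ξ : K}
    {m p : ℕ} (hξ : IsPrimitiveRoot ξ m) (hm : 1 < m) (hp : p.Prime)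
    (hpm : (p : ℤ) ≡ -1 [ZMOD m]) (n : ℕ) :
    (cyclotomic (p ^ (n + 1)) K).eval ξ = -(ξ ^ ((-1 : ℤ) ^ (n + 1))) := by
  have := Fact.mk hp
  have hmul := congrArg (eval ξ) (cyclotomic_prime_pow_mul_X_pow_sub_one K p n)
  have hpow (j : ℕ) : ξ ^ p ^ j = ξ ^ ((-1 : ℤ) ^ j) := by
    rw [← zpow_natCast, Nat.cast_pow]
    exact hξ.zpow_eq_zpow_of_modEq (hpm.pow j)
  simp only [eval_mul, eval_sub, eval_pow, eval_X, eval_one, hpow] at hmul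
  set ζ := ξ ^ ((-1 : ℤ) ^ n)
  have hζ1 : ζ - 1 ≠ 0 := sub_ne_zero.2 (hξ.zpow_neg_one_pow_ne_one hm n)
  have hζ0 : ζ ≠ 0 := zpow_ne_zero _ (hξ.ne_zero (by omega))
  have hinv : ξ ^ ((-1 : ℤ) ^ (n + 1)) = ζ⁻¹ := by rw [pow_succ, mul_neg_one, zpow_neg]
  rw [hinv] at hmul ⊢
  apply mul_right_cancel₀ hζ1
  rw [hmul]
  field_simp
  ring

theorem cyclotomic_prime_pow_eval_primitiveRoot (m p k : ℕ) (hm : 1 < m)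
    (hp : p.Prime) (hpm : (m : ℤ) ∣ (p : ℤ) + 1) (hk : 1 ≤ k)
    (ξ : ℂ) (hξ : IsPrimitiveRoot ξ m) :
    (cyclotomic (p ^ k) ℂ).eval ξ = -(ξ ^ ((-1 : ℤ) ^ k)) := by
  obtain ⟨n, rfl⟩ : ∃ n, k = n + 1 := ⟨k - 1, by omega⟩
  have hpm' : (p : ℤ) ≡ -1 [ZMOD m] := (Int.modEq_iff_dvd.2 (by simpa using hpm)).symm
  exact eval_cyclotomic_prime_pow_succ_of_modEq_neg_one hξ hm hp hpm' n
end

section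
/- The value of the n-th cyclotomic polynomial at i (the imaginary unit) is: Φ_1(i) = i−1, Φ_2(i) = i+1, Φ_4(i) = 0, Φ_{4p^k}(i) = p for any prime p and k ≥ 1, Φ_{q^k}(i) = (−1)^{k+1} i and Φ_{2q^k}(i) = (−1)^k i for any prime q ≡ 3 (mod 4) and k ≥ 1, Φ_{q^k r^l}(i) = Φ_{2 q^k r^l}(i) = −1 for distinct primes q, r ≡ 3 (mod 4) and k, l ≥ 1, and Φ_n(i) = 1 in all other cases. -/
/-!
For a prime `p`, `Φ_{np}(X) = Φ_n(X^p)` if `p ∣ n` and `Φ_{np}(X) Φ_n(X) = Φ_n(X^p)` otherwise.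
At `X = i`, an odd prime has `i^p = i` (`p ≡ 1 mod 4`) or `i^p = conj i` (`p ≡ 3 mod 4`), and
`Φ_n(conj i) = conj Φ_n(i)`. So for odd `n`, adjoining a new prime factor `p` turns the value
`u = Φ_n(i)` into `u / u = 1` (`p ≡ 1`) or `conj u / u` (`p ≡ 3`), which is `-1` for `u = ±i` and
`1` for `u = ±1`, while raising the exponent of `p` leaves the value alone or conjugates it.
The prime `2` is handled by `i^2 = -1`: `Φ_{2m}(i) Φ_m(i) = Φ_m(-1) = 1` for odd `m > 1`, and
`Φ_{4t}(i) = Φ_{2t}(-1) = Φ_t(1)`, whose values are known.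
-/

open Polynomial Complex ComplexConjugate

section CommRing

variable {R : Type*} [CommRing R]

theorem eval_cyclotomic_mul_prime_of_dvd {p n : ℕ} (hp : p.Prime) (h : p ∣ n) (x : R) :
    (cyclotomic (n * p) R).eval x = (cyclotomic n R).eval (x ^ p) := by
  rw [← cyclotomic_expand_eq_cyclotomic hp h, expand_eval]

theorem eval_cyclotomic_mul_prime_mul_of_not_dvd {p n : ℕ} (hp : p.Prime) (h : ¬p ∣ n)
    (x : R) : (cyclotomic (n * p) R).eval x * (cyclotomic n R).eval x =
      (cyclotomic n R).eval (x ^ p) := by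
  rw [← eval_mul, ← cyclotomic_expand_eq_cyclotomic_mul hp h, expand_eval]

@[elab_as_elim]
theorem odd_induction_on_primes {motive : ℕ → Prop}
    (prime : ∀ p, p.Prime → Odd p → motive p)
    (mul_prime : ∀ t p, p.Prime → Odd p → Odd t → 1 < t → motive t → motive (t * p))
    {n : ℕ} (hn : Odd n) (h1 : 1 < n) : motive n := by
  induction n using induction_on_primes with
  | zero => simp at hn
  | one => simp at h1
  | prime_mul p t hp ih =>
    obtain ⟨hp_odd, ht_odd⟩ := Nat.odd_mul.1 hn
    rcases Nat.lt_or_eq_of_le ht_odd.pos with ht | rfl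
    · rw [mul_comm]
      exact mul_prime t p hp hp_odd ht_odd ht (ih ht_odd ht)
    · simpa using prime p hp hp_odd

theorem eval_neg_one_cyclotomic_of_odd {m : ℕ} (hm : Odd m) (h1 : 1 < m) :
    (cyclotomic m R).eval (-1) = 1 := by
  refine odd_induction_on_primes (fun p hp hp_odd => ?_) (fun t p hp hp_odd _ _ ih => ?_) hm h1
  · have := Fact.mk hp
    simp [cyclotomic_prime, eval_finsetSum, neg_one_geom_sum, Nat.not_even_iff_odd.2 hp_odd]
  · have hpow : (-1 : R) ^ p = -1 := hp_odd.neg_one_pow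
    by_cases hpt : p ∣ t
    · rw [eval_cyclotomic_mul_prime_of_dvd hp hpt, hpow, ih]
    · simpa [hpow, ih] using eval_cyclotomic_mul_prime_mul_of_not_dvd hp hpt (-1 : R)

theorem eval_neg_one_cyclotomic_two_mul (t : ℕ) :
    (cyclotomic (2 * t) R).eval (-1) = (cyclotomic t R).eval 1 := by
  rw [mul_comm]
  rcases Nat.even_or_odd t with ht | ht
  · simpa using eval_cyclotomic_mul_prime_of_dvd Nat.prime_two (even_iff_two_dvd.1 ht) (-1 : R)
  rcases Nat.lt_or_eq_of_le ht.pos with ht1 | rfl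
  · have := eval_cyclotomic_mul_prime_mul_of_not_dvd Nat.prime_two
      (Nat.not_even_iff_odd.2 ht ∘ even_iff_two_dvd.2) (-1 : R)
    simpa [eval_neg_one_cyclotomic_of_odd ht ht1] using this
  · simp [cyclotomic_two]

end CommRing

theorem odd_of_mod_four_eq_three {q : ℕ} (h : q % 4 = 3) : Odd q :=
  Nat.odd_iff.2 (Nat.odd_of_mod_four_eq_three h)

theorem Odd.ne_four {n : ℕ} (h : Odd n) : n ≠ 4 := by
  rintro rfl
  exact absurd h (by decide)

theorem eval_conj_cyclotomic (n : ℕ) (z : ℂ) :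
    (cyclotomic n ℂ).eval (conj z) = conj ((cyclotomic n ℂ).eval z) := by
  rw [← eval₂_at_apply, ← eval_map, map_cyclotomic]

theorem I_pow_of_mod_four_eq_one {p : ℕ} (h : p % 4 = 1) : I ^ p = I := by
  rw [I_pow_eq_pow_mod, h, pow_one]

theorem I_pow_of_mod_four_eq_three {p : ℕ} (h : p % 4 = 3) : I ^ p = conj I := by
  rw [I_pow_eq_pow_mod, h, I_pow_three, conj_I]

theorem I_sub_one_ne_zero : I - 1 ≠ 0 :=
  sub_ne_zero.2 fun h => by simpa using congrArg im h

theorem eval_I_cyclotomic_ne_zero {n : ℕ} (h : n ≠ 4) : (cyclotomic n ℂ).eval I ≠ 0 := by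
  rcases Nat.eq_zero_or_pos n with rfl | hn
  · simp
  · exact fun h0 => h (((isRoot_cyclotomic_iff_charZero hn).1 h0).unique isPrimitiveRoot_I)

theorem eval_I_cyclotomic_four_mul (t : ℕ) :
    (cyclotomic (4 * t) ℂ).eval I = (cyclotomic t ℂ).eval 1 := by
  rw [show 4 * t = 2 * t * 2 by ring, eval_cyclotomic_mul_prime_of_dvd Nat.prime_two
    (dvd_mul_right 2 t), I_sq, eval_neg_one_cyclotomic_two_mul]

theorem eval_I_cyclotomic_two_mul {m : ℕ} (hm : Odd m) (h1 : 1 < m) :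
    (cyclotomic (2 * m) ℂ).eval I = ((cyclotomic m ℂ).eval I)⁻¹ := by
  refine eq_inv_of_mul_eq_one_left ?_
  rw [mul_comm 2, eval_cyclotomic_mul_prime_mul_of_not_dvd Nat.prime_two
    (Nat.not_even_iff_odd.2 hm ∘ even_iff_two_dvd.2), I_sq, eval_neg_one_cyclotomic_of_odd hm h1]

theorem eval_I_cyclotomic_prime_mul_I_sub_one {p : ℕ} (hp : p.Prime) :
    (cyclotomic p ℂ).eval I * (I - 1) = I ^ p - 1 := by
  have := Fact.mk hp
  simpa [cyclotomic_prime, eval_finsetSum] using geom_sum_mul I p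

theorem eval_I_cyclotomic_prime_of_mod_four_eq_one {p : ℕ} (hp : p.Prime) (hp1 : p % 4 = 1) :
    (cyclotomic p ℂ).eval I = 1 := by
  refine mul_right_cancel₀ I_sub_one_ne_zero ?_
  rw [eval_I_cyclotomic_prime_mul_I_sub_one hp, I_pow_of_mod_four_eq_one hp1, one_mul]

theorem eval_I_cyclotomic_prime_of_mod_four_eq_three {p : ℕ} (hp : p.Prime) (hp3 : p % 4 = 3) :
    (cyclotomic p ℂ).eval I = I := by
  refine mul_right_cancel₀ I_sub_one_ne_zero ?_
  rw [eval_I_cyclotomic_prime_mul_I_sub_one hp, I_pow_of_mod_four_eq_three hp3, conj_I]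
  linear_combination (-1 : ℂ) * I_sq

section OddPrime

variable {p n : ℕ}

theorem eval_I_cyclotomic_mul_prime_of_dvd_of_mod_four_eq_one (hp : p.Prime) (hp1 : p % 4 = 1)
    (hpn : p ∣ n) : (cyclotomic (n * p) ℂ).eval I = (cyclotomic n ℂ).eval I := by
  rw [eval_cyclotomic_mul_prime_of_dvd hp hpn, I_pow_of_mod_four_eq_one hp1]

theorem eval_I_cyclotomic_mul_prime_of_dvd_of_mod_four_eq_three (hp : p.Prime) (hp3 : p % 4 = 3)
    (hpn : p ∣ n) : (cyclotomic (n * p) ℂ).eval I = conj ((cyclotomic n ℂ).eval I) := by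
  rw [eval_cyclotomic_mul_prime_of_dvd hp hpn, I_pow_of_mod_four_eq_three hp3,
    eval_conj_cyclotomic]

theorem eval_I_cyclotomic_mul_prime_of_mod_four_eq_one (hp : p.Prime) (hp1 : p % 4 = 1)
    (hpn : ¬p ∣ n) (hn : n ≠ 4) : (cyclotomic (n * p) ℂ).eval I = 1 := by
  have := eval_cyclotomic_mul_prime_mul_of_not_dvd hp hpn I
  rw [I_pow_of_mod_four_eq_one hp1] at this
  exact (mul_left_eq_self₀.1 this).resolve_right (eval_I_cyclotomic_ne_zero hn)

theorem eval_I_cyclotomic_mul_prime_mul_of_mod_four_eq_three (hp : p.Prime) (hp3 : p % 4 = 3)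
    (hpn : ¬p ∣ n) :
    (cyclotomic (n * p) ℂ).eval I * (cyclotomic n ℂ).eval I = conj ((cyclotomic n ℂ).eval I) := by
  rw [eval_cyclotomic_mul_prime_mul_of_not_dvd hp hpn, I_pow_of_mod_four_eq_three hp3,
    eval_conj_cyclotomic]

theorem eval_I_cyclotomic_mul_prime_of_conj_eq_self (hp : p.Prime) (hp3 : p % 4 = 3)
    (hpn : ¬p ∣ n) (hn : n ≠ 4)
    (hreal : conj ((cyclotomic n ℂ).eval I) = (cyclotomic n ℂ).eval I) :
    (cyclotomic (n * p) ℂ).eval I = 1 := by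
  have := eval_I_cyclotomic_mul_prime_mul_of_mod_four_eq_three hp hp3 hpn
  rw [hreal] at this
  exact (mul_left_eq_self₀.1 this).resolve_right (eval_I_cyclotomic_ne_zero hn)

theorem eval_I_cyclotomic_mul_prime_of_conj_eq_neg (hp : p.Prime) (hp3 : p % 4 = 3)
    (hpn : ¬p ∣ n) (hn : n ≠ 4)
    (himag : conj ((cyclotomic n ℂ).eval I) = -(cyclotomic n ℂ).eval I) :
    (cyclotomic (n * p) ℂ).eval I = -1 := by
  have := eval_I_cyclotomic_mul_prime_mul_of_mod_four_eq_three hp hp3 hpn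
  rw [himag, neg_eq_neg_one_mul] at this
  exact mul_right_cancel₀ (eval_I_cyclotomic_ne_zero hn) this

end OddPrime

theorem eval_I_cyclotomic_prime_pow {q k : ℕ} (hq : q.Prime) (hq3 : q % 4 = 3) (hk : 1 ≤ k) :
    (cyclotomic (q ^ k) ℂ).eval I = (-1) ^ (k + 1) * I := by
  induction k, hk using Nat.le_induction with
  | base => simp [eval_I_cyclotomic_prime_of_mod_four_eq_three hq hq3]
  | succ k hk ih =>
    rw [pow_succ, eval_I_cyclotomic_mul_prime_of_dvd_of_mod_four_eq_three hq hq3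
      (dvd_pow_self q (by omega)), ih]
    simp [pow_succ]

theorem eval_I_cyclotomic_prime_pow_mul_prime_pow {q r k l : ℕ} (hq : q.Prime) (hr : r.Prime)
    (hq3 : q % 4 = 3) (hr3 : r % 4 = 3) (hqr : q ≠ r) (hk : 1 ≤ k) (hl : 1 ≤ l) :
    (cyclotomic (q ^ k * r ^ l) ℂ).eval I = -1 := by
  induction l, hl using Nat.le_induction with
  | base =>
    have hrq : ¬r ∣ q ^ k := fun h =>
      hqr ((Nat.prime_dvd_prime_iff_eq hr hq).1 (hr.dvd_of_dvd_pow h)).symm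
    rw [pow_one]
    refine eval_I_cyclotomic_mul_prime_of_conj_eq_neg hr hr3 hrq
      (odd_of_mod_four_eq_three hq3).pow.ne_four ?_
    simp [eval_I_cyclotomic_prime_pow hq hq3 hk]
  | succ l hl ih =>
    rw [pow_succ, ← mul_assoc, eval_I_cyclotomic_mul_prime_of_dvd_of_mod_four_eq_three hr
      hr3 (dvd_mul_of_dvd_right (dvd_pow_self r (by omega)) _), ih]
    simp

/-- The primes `q ≡ 3 (mod 4)` are the rational primes that stay prime (are inert) in `ℤ[i]`. -/
def IsInertPrimePow (n : ℕ) : Prop :=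
  ∃ q k : ℕ, q.Prime ∧ q % 4 = 3 ∧ 1 ≤ k ∧ n = q ^ k

def IsInertPrimePowMul (n : ℕ) : Prop :=
  ∃ q r k l : ℕ, q.Prime ∧ r.Prime ∧ q % 4 = 3 ∧ r % 4 = 3 ∧ q ≠ r ∧ 1 ≤ k ∧ 1 ≤ l ∧
    n = q ^ k * r ^ l

section InertPrimePow

variable {n p : ℕ}

theorem IsInertPrimePow.mul_prime_of_dvd (h : IsInertPrimePow n) (hp : p.Prime) (hpn : p ∣ n) :
    IsInertPrimePow (n * p) := by
  obtain ⟨q, k, hq, hq3, hk, rfl⟩ := h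
  obtain rfl := (Nat.prime_dvd_prime_iff_eq hp hq).1 (hp.dvd_of_dvd_pow hpn)
  exact ⟨p, k + 1, hq, hq3, by omega, (pow_succ p k).symm⟩

theorem IsInertPrimePow.mul_prime_of_not_dvd (h : IsInertPrimePow n) (hp : p.Prime)
    (hp3 : p % 4 = 3) (hpn : ¬p ∣ n) : IsInertPrimePowMul (n * p) := by
  obtain ⟨q, k, hq, hq3, hk, rfl⟩ := h
  refine ⟨q, p, k, 1, hq, hp, hq3, hp3, ?_, hk, le_rfl, by rw [pow_one]⟩
  rintro rfl
  exact hpn (dvd_pow_self q (by omega))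

theorem IsInertPrimePowMul.mul_prime_of_dvd (h : IsInertPrimePowMul n) (hp : p.Prime)
    (hpn : p ∣ n) : IsInertPrimePowMul (n * p) := by
  obtain ⟨q, r, k, l, hq, hr, hq3, hr3, hqr, hk, hl, rfl⟩ := h
  rcases hp.dvd_mul.1 hpn with hpq | hpr
  · obtain rfl := (Nat.prime_dvd_prime_iff_eq hp hq).1 (hp.dvd_of_dvd_pow hpq)
    exact ⟨p, r, k + 1, l, hq, hr, hq3, hr3, hqr, by omega, hl, by ring⟩
  · obtain rfl := (Nat.prime_dvd_prime_iff_eq hp hr).1 (hp.dvd_of_dvd_pow hpr)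
    exact ⟨q, p, k, l + 1, hq, hr, hq3, hr3, hqr, hk, by omega, by ring⟩

theorem IsInertPrimePowMul.eval_I_cyclotomic (h : IsInertPrimePowMul n) :
    (cyclotomic n ℂ).eval I = -1 := by
  obtain ⟨q, r, k, l, hq, hr, hq3, hr3, hqr, hk, hl, rfl⟩ := h
  exact eval_I_cyclotomic_prime_pow_mul_prime_pow hq hr hq3 hr3 hqr hk hl

end InertPrimePow

theorem eval_I_cyclotomic_of_odd {n : ℕ} (hn : Odd n) (h1 : 1 < n) (hA : ¬IsInertPrimePow n)
    (hB : ¬IsInertPrimePowMul n) : (cyclotomic n ℂ).eval I = 1 := by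
  refine odd_induction_on_primes (motive := fun n => ¬IsInertPrimePow n →
    ¬IsInertPrimePowMul n → (cyclotomic n ℂ).eval I = 1) ?_ ?_ hn h1 hA hB
  · intro p hp hp_odd hA _
    rcases Nat.odd_mod_four_iff.1 (Nat.odd_iff.1 hp_odd) with hp1 | hp3
    · exact eval_I_cyclotomic_prime_of_mod_four_eq_one hp hp1
    · exact absurd ⟨p, 1, hp, hp3, le_rfl, (pow_one p).symm⟩ hA
  · intro t p hp hp_odd ht_odd _ ih hA hB
    by_cases hpt : p ∣ t
    · have hone := ih (mt (·.mul_prime_of_dvd hp hpt) hA) (mt (·.mul_prime_of_dvd hp hpt) hB)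
      rcases Nat.odd_mod_four_iff.1 (Nat.odd_iff.1 hp_odd) with hp1 | hp3
      · rw [eval_I_cyclotomic_mul_prime_of_dvd_of_mod_four_eq_one hp hp1 hpt, hone]
      · rw [eval_I_cyclotomic_mul_prime_of_dvd_of_mod_four_eq_three hp hp3 hpt, hone, map_one]
    rcases Nat.odd_mod_four_iff.1 (Nat.odd_iff.1 hp_odd) with hp1 | hp3
    · exact eval_I_cyclotomic_mul_prime_of_mod_four_eq_one hp hp1 hpt ht_odd.ne_four
    refine eval_I_cyclotomic_mul_prime_of_conj_eq_self hp hp3 hpt ht_odd.ne_four ?_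
    by_cases hBt : IsInertPrimePowMul t
    · simp [hBt.eval_I_cyclotomic]
    · rw [ih (mt (·.mul_prime_of_not_dvd hp hp3 hpt) hB) hBt, map_one]

theorem eval_I_cyclotomic_eq_one {n : ℕ} (h1 : n ≠ 1) (h2 : n ≠ 2) (h4 : n ≠ 4)
    (hA4 : ¬∃ p k : ℕ, p.Prime ∧ 1 ≤ k ∧ n = 4 * p ^ k)
    (hA : ¬∃ q k : ℕ, q.Prime ∧ q % 4 = 3 ∧ 1 ≤ k ∧ (n = q ^ k ∨ n = 2 * q ^ k))
    (hB : ¬∃ q r k l : ℕ, q.Prime ∧ r.Prime ∧ q % 4 = 3 ∧ r % 4 = 3 ∧ q ≠ r ∧ 1 ≤ k ∧ 1 ≤ l ∧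
      (n = q ^ k * r ^ l ∨ n = 2 * (q ^ k * r ^ l))) :
    (cyclotomic n ℂ).eval I = 1 := by
  rcases Nat.even_or_odd n with hn | hn
  · obtain ⟨m, rfl⟩ := even_iff_two_dvd.1 hn
    rcases Nat.even_or_odd m with hm | hm
    · obtain ⟨t, rfl⟩ := even_iff_two_dvd.1 hm
      rw [show 2 * (2 * t) = 4 * t by ring, eval_I_cyclotomic_four_mul]
      refine eval_one_cyclotomic_not_prime_pow fun {p} hp k hpk => ?_
      rcases k with _ | k
      · exact h4 (by rw [← hpk]; rfl)
      · exact hA4 ⟨p, k + 1, hp, by omega, by rw [hpk]; ring⟩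
    have hm1 : 1 < m := by
      rcases Nat.lt_or_eq_of_le hm.pos with h | rfl
      exacts [h, absurd rfl h2]
    rw [eval_I_cyclotomic_two_mul hm hm1, eval_I_cyclotomic_of_odd hm hm1, inv_one]
    · rintro ⟨q, k, hq, hq3, hk, rfl⟩
      exact hA ⟨q, k, hq, hq3, hk, Or.inr rfl⟩
    · rintro ⟨q, r, k, l, hq, hr, hq3, hr3, hqr, hk, hl, rfl⟩
      exact hB ⟨q, r, k, l, hq, hr, hq3, hr3, hqr, hk, hl, Or.inr rfl⟩
  have hn1 : 1 < n := by
    rcases Nat.lt_or_eq_of_le hn.pos with h | rfl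
    exacts [h, absurd rfl h1]
  refine eval_I_cyclotomic_of_odd hn hn1 ?_ ?_
  · rintro ⟨q, k, hq, hq3, hk, rfl⟩
    exact hA ⟨q, k, hq, hq3, hk, Or.inl rfl⟩
  · rintro ⟨q, r, k, l, hq, hr, hq3, hr3, hqr, hk, hl, rfl⟩
    exact hB ⟨q, r, k, l, hq, hr, hq3, hr3, hqr, hk, hl, Or.inl rfl⟩

theorem cyclotomic_eval_I :
    (cyclotomic 1 ℂ).eval I = I - 1 ∧
    (cyclotomic 2 ℂ).eval I = I + 1 ∧
    (cyclotomic 4 ℂ).eval I = 0 ∧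
    (∀ p k : ℕ, p.Prime → 1 ≤ k → (cyclotomic (4 * p ^ k) ℂ).eval I = p) ∧
    (∀ q k : ℕ, q.Prime → q % 4 = 3 → 1 ≤ k →
      (cyclotomic (q ^ k) ℂ).eval I = (-1) ^ (k + 1) * I) ∧
    (∀ q k : ℕ, q.Prime → q % 4 = 3 → 1 ≤ k →
      (cyclotomic (2 * q ^ k) ℂ).eval I = (-1) ^ k * I) ∧
    (∀ q r k l : ℕ, q.Prime → r.Prime → q % 4 = 3 → r % 4 = 3 → q ≠ r → 1 ≤ k → 1 ≤ l →
      (cyclotomic (q ^ k * r ^ l) ℂ).eval I = -1 ∧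
      (cyclotomic (2 * (q ^ k * r ^ l)) ℂ).eval I = -1) ∧
    (∀ n : ℕ, n ≠ 1 → n ≠ 2 → n ≠ 4 →
      (¬ ∃ p k : ℕ, p.Prime ∧ 1 ≤ k ∧ n = 4 * p ^ k) →
      (¬ ∃ q k : ℕ, q.Prime ∧ q % 4 = 3 ∧ 1 ≤ k ∧ (n = q ^ k ∨ n = 2 * q ^ k)) →
      (¬ ∃ q r k l : ℕ, q.Prime ∧ r.Prime ∧ q % 4 = 3 ∧ r % 4 = 3 ∧ q ≠ r ∧ 1 ≤ k ∧ 1 ≤ l ∧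
        (n = q ^ k * r ^ l ∨ n = 2 * (q ^ k * r ^ l))) →
      (cyclotomic n ℂ).eval I = 1) := by
  refine ⟨by simp [cyclotomic_one], by simp [cyclotomic_two],
    by simpa using eval_I_cyclotomic_four_mul 1, fun p k hp hk => ?_,
    fun q k hq hq3 hk => eval_I_cyclotomic_prime_pow hq hq3 hk, fun q k hq hq3 hk => ?_,
    fun q r k l hq hr hq3 hr3 hqr hk hl => ?_, fun n => eval_I_cyclotomic_eq_one⟩
  · have := Fact.mk hp
    obtain ⟨k, rfl⟩ := Nat.exists_eq_add_of_le' hk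
    rw [eval_I_cyclotomic_four_mul, eval_one_cyclotomic_prime_pow]
  · have hq1 : 1 < q ^ k := Nat.one_lt_pow (by omega) hq.one_lt
    rw [eval_I_cyclotomic_two_mul (odd_of_mod_four_eq_three hq3).pow hq1,
      eval_I_cyclotomic_prime_pow hq hq3 hk]
    simp [pow_succ, mul_comm, ← inv_pow]
  · have hodd : Odd (q ^ k * r ^ l) :=
      (odd_of_mod_four_eq_three hq3).pow.mul (odd_of_mod_four_eq_three hr3).pow
    have hqr1 : 1 < q ^ k * r ^ l :=
      one_lt_mul_of_lt_of_le (Nat.one_lt_pow (by omega) hq.one_lt) (Nat.one_le_pow _ _ hr.pos)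
    have hval := eval_I_cyclotomic_prime_pow_mul_prime_pow hq hr hq3 hr3 hqr hk hl
    refine ⟨hval, ?_⟩
    rw [eval_I_cyclotomic_two_mul hodd hqr1, hval]
    norm_num
end

section
/- Let m ∈ {1,2,3,4,6}, let n > m, and let ξ be any primitive m-th root of unity. Then |Φ_n(ξ)| = p if m | n and n/m = p^k is a prime power (k ≥ 1), and |Φ_n(ξ)| = 1 otherwise. -/
open Polynomial Finset

/-- The target value of `|Φ_d(ξ)|²` where `ξ` is a primitive `m`-th root of unity. -/
noncomputable def cval (m : ℕ) (ξ : ℂ) (d : ℕ) : ℝ :=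
  if m ∣ d then
    (if d = m then 0 else if IsPrimePow (d / m) then ((d / m).minFac : ℝ) ^ 2 else 1)
  else if d ∣ m then ‖(cyclotomic d ℂ).eval ξ‖ ^ 2 else 1

lemma prod_if_primePow_minFac {t : ℕ} (ht : t ≠ 0) :
    ∏ s ∈ t.divisors, (if IsPrimePow s then (s.minFac : ℝ) else 1) = t := by
  have h := congrArg Real.exp (ArithmeticFunction.vonMangoldt_sum (n := t))
  rw [Real.exp_sum, Real.exp_log (by exact_mod_cast ht.bot_lt)] at h
  rw [← h]
  apply Finset.prod_congr rfl
  intro s _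
  rw [ArithmeticFunction.vonMangoldt_apply]
  split
  · exact (Real.exp_log (by exact_mod_cast s.minFac_pos)).symm
  · simp

lemma prim_conj_or {r : ℕ} (hr : 0 < r) (htot : r.totient ≤ 2) {a b : ℂ}
    (ha : IsPrimitiveRoot a r) (hb : IsPrimitiveRoot b r) :
    b = a ∨ b = (starRingEnd ℂ) a := by
  have hca : IsPrimitiveRoot ((starRingEnd ℂ) a) r :=
    ha.map_of_injective (starRingEnd ℂ).injective
  by_contra hcon
  push_neg at hcon
  obtain ⟨h1, h2⟩ := hcon
  by_cases hc : (starRingEnd ℂ) a = a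
  · -- `a` is real, so `a^2 = 1` and `r ≤ 2`, totient 1, contradiction with `b ≠ a`
    have habs : ‖a‖ = 1 := by
      exact ha.norm'_eq_one hr.ne'
    have ha2 : a ^ 2 = 1 := by
      have := Complex.mul_conj a
      rw [hc] at this
      rw [sq, this, Complex.normSq_eq_norm_sq, habs]
      norm_num
    have hrd : r ∣ 2 := by
      have : orderOf a ∣ 2 := orderOf_dvd_of_pow_eq_one ha2
      rwa [← ha.eq_orderOf] at this
    have hle : r ≤ 2 := Nat.le_of_dvd (by norm_num) hrd
    have hφ : r.totient = 1 := by interval_cases r <;> simp_all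
    have hmem : ∀ z : ℂ, IsPrimitiveRoot z r → z ∈ primitiveRoots r ℂ := fun z hz =>
      (mem_primitiveRoots hr).mpr hz
    have hcard : (primitiveRoots r ℂ).card = 1 := by
      rw [Complex.card_primitiveRoots, hφ]
    exact h1 (Finset.card_le_one.mp hcard.le _ (hmem _ hb) _ (hmem _ ha))
  · have hsub : ({a, (starRingEnd ℂ) a, b} : Finset ℂ) ⊆ primitiveRoots r ℂ := by
      intro x hx
      simp only [Finset.mem_insert, Finset.mem_singleton] at hx
      rcases hx with rfl | rfl | rfl <;> exact (mem_primitiveRoots hr).mpr (by assumption)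
    have hcard : ({a, (starRingEnd ℂ) a, b} : Finset ℂ).card = 3 := by
      rw [Finset.card_insert_of_notMem (by
          simp only [Finset.mem_insert, Finset.mem_singleton]
          push_neg
          exact ⟨fun h => hc h.symm, fun h => h1 h.symm⟩),
        Finset.card_insert_of_notMem (by
          simp only [Finset.mem_singleton]
          exact fun h => h2 h.symm), Finset.card_singleton]
    have := Finset.card_le_card hsub
    rw [hcard, Complex.card_primitiveRoots] at this
    omega

lemma abs_sub_one_eq {r : ℕ} (hr : 0 < r) (htot : r.totient ≤ 2) {a b : ℂ}
    (ha : IsPrimitiveRoot a r) (hb : IsPrimitiveRoot b r) :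
    ‖b - 1‖ = ‖a - 1‖ := by
  rcases prim_conj_or hr htot ha hb with rfl | rfl
  · rfl
  · rw [show (starRingEnd ℂ) a - 1 = (starRingEnd ℂ) (a - 1) by rw [map_sub, map_one],
      Complex.norm_conj]

lemma cval_pos {m : ℕ} (hm : 0 < m) {ξ : ℂ} (hξ : IsPrimitiveRoot ξ m) {d : ℕ} (hd : d ≠ m) :
    0 < cval m ξ d := by
  unfold cval
  by_cases h : m ∣ d
  · rw [if_pos h, if_neg hd]
    split
    · exact pow_pos (by exact_mod_cast (d / m).minFac_pos) 2
    · norm_num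
  · rw [if_neg h]
    split
    · rename_i h2
      have hd0 : d ≠ 0 := by rintro rfl; rw [Nat.zero_dvd] at h2; omega
      have : NeZero d := ⟨hd0⟩
      have hroot : ¬ (cyclotomic d ℂ).IsRoot ξ := by
        rw [isRoot_cyclotomic_iff]
        intro hcon
        exact hd (hcon.unique hξ)
      have : ‖(cyclotomic d ℂ).eval ξ‖ ≠ 0 := by
        simpa [norm_eq_zero] using hroot
      positivity
    · norm_num

lemma cval_L1 {m : ℕ} (hm : 0 < m) {ξ : ℂ} (hξ : IsPrimitiveRoot ξ m)
    (htot : ∀ r, r ∣ m → r.totient ≤ 2) {n : ℕ} (hn : 0 < n) (hmn : ¬ m ∣ n) :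
    ∏ d ∈ n.divisors, cval m ξ d = ‖ξ ^ n - 1‖ ^ 2 := by
  set g := Nat.gcd n m with hg
  have hgn : g ∣ n := Nat.gcd_dvd_left n m
  have hgm : g ∣ m := Nat.gcd_dvd_right n m
  have hg0 : 0 < g := Nat.gcd_pos_of_pos_left m hn
  have step1 : ∏ d ∈ n.divisors, cval m ξ d
      = ∏ d ∈ n.divisors.filter (· ∣ m), cval m ξ d := by
    refine (Finset.prod_filter_of_ne ?_).symm
    intro d hd hne
    by_contra hdm
    apply hne
    unfold cval
    rw [if_neg, if_neg hdm]
    intro hmd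
    exact hmn (hmd.trans (Nat.mem_divisors.mp hd).1)
  have step2 : n.divisors.filter (· ∣ m) = g.divisors := by
    ext d
    constructor
    · intro hdmem
      obtain ⟨hmem, h3⟩ := Finset.mem_filter.mp hdmem
      obtain ⟨h1, -⟩ := Nat.mem_divisors.mp hmem
      exact Nat.mem_divisors.mpr ⟨Nat.dvd_gcd h1 h3, hg0.ne'⟩
    · intro hdmem
      obtain ⟨h1, -⟩ := Nat.mem_divisors.mp hdmem
      exact Finset.mem_filter.mpr
        ⟨Nat.mem_divisors.mpr ⟨h1.trans hgn, hn.ne'⟩, h1.trans hgm⟩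
  have step3 : ∀ d ∈ g.divisors, cval m ξ d = ‖(cyclotomic d ℂ).eval ξ‖ ^ 2 := by
    intro d hd
    obtain ⟨hdg, -⟩ := Nat.mem_divisors.mp hd
    have hdm : d ∣ m := hdg.trans hgm
    unfold cval
    rw [if_neg, if_pos hdm]
    intro hmd
    exact hmn ((hmd.trans hdg).trans hgn)
  rw [step1, step2, Finset.prod_congr rfl step3, Finset.prod_pow]
  have key : ∏ x ∈ g.divisors, ‖eval ξ (cyclotomic x ℂ)‖
      = ‖ξ ^ g - 1‖ := by
    rw [← norm_prod, ← eval_prod, prod_cyclotomic_eq_X_pow_sub_one hg0, eval_sub, eval_pow,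
      eval_X, eval_one]
  rw [key]
  congr 1
  -- |ξ^g - 1| = |ξ^n - 1|
  have hr1 : g * (m / g) = m := Nat.mul_div_cancel' hgm
  have hrm : m / g ∣ m := Nat.div_dvd_of_dvd hgm
  have hr0 : 0 < m / g := Nat.div_pos (Nat.le_of_dvd hm hgm) hg0
  have hprim1 : IsPrimitiveRoot (ξ ^ g) (m / g) := hξ.pow hm hr1.symm
  have hprim2 : IsPrimitiveRoot (ξ ^ n) (m / g) := by
    have hcop : (n / g).Coprime (m / g) := Nat.coprime_div_gcd_div_gcd hg0
    have : ξ ^ n = (ξ ^ g) ^ (n / g) := by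
      rw [← pow_mul, Nat.mul_div_cancel' hgn]
    rw [this]
    exact hprim1.pow_of_coprime _ hcop
  exact (abs_sub_one_eq hr0 (htot _ hrm) hprim1 hprim2).symm


lemma cval_L2 {m : ℕ} (hm : 0 < m) (ξ : ℂ) {n : ℕ} (hn : 0 < n) (hdvd : m ∣ n) (hne : n ≠ m) :
    ∏ d ∈ n.divisors \ m.divisors, cval m ξ d = ((n / m : ℕ) : ℝ) ^ 2 := by
  set t := n / m with ht
  have htn : n = m * t := (Nat.mul_div_cancel' hdvd).symm
  have ht0 : t ≠ 0 := by rintro h; rw [h, mul_zero] at htn; omega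
  have ht1 : t ≠ 1 := by rintro h; rw [h, mul_one] at htn; omega
  have step1 : ∏ d ∈ n.divisors \ m.divisors, cval m ξ d
      = ∏ d ∈ (n.divisors \ m.divisors).filter (m ∣ ·), cval m ξ d := by
    refine (Finset.prod_filter_of_ne ?_).symm
    intro d hd hne'
    by_contra hmd
    apply hne'
    obtain ⟨-, hd2⟩ := Finset.mem_sdiff.mp hd
    have hdm : ¬ d ∣ m := fun h => hd2 (Nat.mem_divisors.mpr ⟨h, hm.ne'⟩)
    unfold cval
    rw [if_neg hmd, if_neg hdm]
  have step2 : ∏ d ∈ (n.divisors \ m.divisors).filter (m ∣ ·), cval m ξ d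
      = ∏ s ∈ t.divisors.erase 1, (if IsPrimePow s then ((s.minFac : ℝ)) else 1) ^ 2 := by
    refine Finset.prod_nbij' (fun d => d / m) (fun s => m * s) ?_ ?_ ?_ ?_ ?_
    · intro d hd
      obtain ⟨hdS, hmd⟩ := Finset.mem_filter.mp hd
      obtain ⟨hd1, hd2⟩ := Finset.mem_sdiff.mp hdS
      obtain ⟨hddvd, -⟩ := Nat.mem_divisors.mp hd1
      obtain ⟨s, rfl⟩ := hmd
      have hst : s ∣ t := (Nat.mul_dvd_mul_iff_left hm).mp (htn ▸ hddvd)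
      refine Finset.mem_erase.mpr ⟨?_, Nat.mem_divisors.mpr ⟨?_, ht0⟩⟩
      · show m * s / m ≠ 1
        rw [Nat.mul_div_cancel_left _ hm]
        rintro rfl
        exact hd2 (Nat.mem_divisors.mpr ⟨by simp, hm.ne'⟩)
      · show m * s / m ∣ t
        rw [Nat.mul_div_cancel_left _ hm]; exact hst
    · intro s hs
      obtain ⟨hs1, hs2⟩ := Finset.mem_erase.mp hs
      obtain ⟨hst, -⟩ := Nat.mem_divisors.mp hs2
      refine Finset.mem_filter.mpr ⟨Finset.mem_sdiff.mpr ⟨?_, ?_⟩, Dvd.intro s rfl⟩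
      · exact Nat.mem_divisors.mpr ⟨htn ▸ mul_dvd_mul_left m hst, by omega⟩
      · intro hmem
        obtain ⟨hdvd', -⟩ := Nat.mem_divisors.mp hmem
        have : s ∣ 1 := (Nat.mul_dvd_mul_iff_left hm).mp (by simpa using hdvd')
        exact hs1 (Nat.dvd_one.mp this)
    · intro d hd
      obtain ⟨-, hmd⟩ := Finset.mem_filter.mp hd
      show m * (d / m) = d
      exact Nat.mul_div_cancel' hmd
    · intro s _
      show m * s / m = s
      exact Nat.mul_div_cancel_left _ hm
    · intro d hd
      obtain ⟨hdS, hmd⟩ := Finset.mem_filter.mp hd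
      obtain ⟨-, hd2⟩ := Finset.mem_sdiff.mp hdS
      have hdm : d ≠ m := fun h => hd2 (by rw [h]; exact Nat.mem_divisors.mpr ⟨dvd_rfl, hm.ne'⟩)
      unfold cval
      rw [if_pos hmd, if_neg hdm]
      split <;> norm_num
  rw [step1, step2, Finset.prod_erase _ (by simp [not_isPrimePow_one]),
    Finset.prod_pow, prod_if_primePow_minFac ht0]

lemma sq_eq_sq_nonneg {a b : ℝ} (ha : 0 ≤ a) (hb : 0 ≤ b) (h : a ^ 2 = b ^ 2) : a = b := by
  have h2 : (a - b) * (a + b) = 0 := by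
    calc (a - b) * (a + b) = a ^ 2 - b ^ 2 := by ring
    _ = 0 := by linarith
  rcases mul_eq_zero.mp h2 with h3 | h3
  · linarith
  · have ha0 : a = 0 := by linarith
    have hb0 : b = 0 := by linarith
    rw [ha0, hb0]

lemma master {m : ℕ} (hm : 0 < m) (htot : ∀ r, r ∣ m → r.totient ≤ 2) {ξ : ℂ}
    (hξ : IsPrimitiveRoot ξ m) :
    ∀ n, 0 < n → ‖(cyclotomic n ℂ).eval ξ‖ ^ 2 = cval m ξ n := by
  intro n
  induction n using Nat.strong_induction_on with
  | _ n IH =>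
  intro hn
  by_cases hdvd : m ∣ n
  · by_cases hne : n = m
    · subst hne
      have h0 : (cyclotomic n ℂ).eval ξ = 0 := hξ.isRoot_cyclotomic hn
      rw [h0, norm_zero]
      unfold cval
      rw [if_pos dvd_rfl, if_pos rfl]
      norm_num
    · set S := n.divisors \ m.divisors with hS
      have hnS : n ∈ S := Finset.mem_sdiff.mpr ⟨Nat.mem_divisors.mpr ⟨dvd_rfl, hn.ne'⟩,
        fun hmem => hne (Nat.dvd_antisymm (Nat.mem_divisors.mp hmem).1 hdvd)⟩
      have hsub : m.divisors ⊆ n.divisors := Nat.divisors_subset_of_dvd hn.ne' hdvd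
      set t := n / m with htdef
      have htn : n = m * t := (Nat.mul_div_cancel' hdvd).symm
      have hXm : (X ^ m - 1 : ℂ[X]) ≠ 0 := by
        have hmonic := monic_X_pow_sub_C (1 : ℂ) hm.ne'
        rw [map_one] at hmonic
        exact hmonic.ne_zero
      have e1 : (X ^ m - 1 : ℂ[X]) * ∑ i ∈ Finset.range t, (X ^ m) ^ i = X ^ n - 1 := by
        rw [mul_geom_sum, ← pow_mul, ← htn]
      have e2 : (X ^ m - 1 : ℂ[X]) * ∏ d ∈ S, cyclotomic d ℂ = X ^ n - 1 := by
        rw [← prod_cyclotomic_eq_X_pow_sub_one hm ℂ, mul_comm, Finset.prod_sdiff hsub,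
          prod_cyclotomic_eq_X_pow_sub_one hn ℂ]
      have hcancel := mul_left_cancel₀ hXm (e2.trans e1.symm)
      have hprod : ∏ d ∈ S, (cyclotomic d ℂ).eval ξ = (t : ℂ) := by
        have heval := congrArg (eval ξ) hcancel
        rw [eval_prod, eval_finset_sum] at heval
        rw [heval]
        simp [eval_pow, hξ.pow_eq_one]
      have habs : ∏ d ∈ S, ‖(cyclotomic d ℂ).eval ξ‖ ^ 2 = ((t : ℕ) : ℝ) ^ 2 := by
        rw [Finset.prod_pow, ← norm_prod, hprod, Complex.norm_natCast]
      rw [← Finset.mul_prod_erase _ _ hnS] at habs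
      have hIH : ∀ d ∈ S.erase n, ‖(cyclotomic d ℂ).eval ξ‖ ^ 2 = cval m ξ d := by
        intro d hdmem
        obtain ⟨hdne, hdS⟩ := Finset.mem_erase.mp hdmem
        obtain ⟨hdmem2, -⟩ := Finset.mem_sdiff.mp hdS
        obtain ⟨hddvd, -⟩ := Nat.mem_divisors.mp hdmem2
        exact IH d (lt_of_le_of_ne (Nat.le_of_dvd hn hddvd) hdne)
          (Nat.pos_of_dvd_of_pos hddvd hn)
      rw [Finset.prod_congr rfl hIH] at habs
      have hL2 := cval_L2 hm ξ hn hdvd hne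
      rw [← Finset.mul_prod_erase _ _ hnS] at hL2
      have hPne : ∏ d ∈ S.erase n, cval m ξ d ≠ 0 := by
        rw [Finset.prod_ne_zero_iff]
        intro d hdmem
        obtain ⟨-, hdS⟩ := Finset.mem_erase.mp hdmem
        obtain ⟨-, hd2⟩ := Finset.mem_sdiff.mp hdS
        have hdm : d ≠ m := fun h => hd2 (by rw [h]; exact Nat.mem_divisors.mpr ⟨dvd_rfl, hm.ne'⟩)
        exact (cval_pos hm hξ hdm).ne'
      exact mul_right_cancel₀ hPne (habs.trans hL2.symm)
  · have hnS : n ∈ n.divisors := Nat.mem_divisors.mpr ⟨dvd_rfl, hn.ne'⟩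
    have habs : ∏ d ∈ n.divisors, ‖(cyclotomic d ℂ).eval ξ‖ ^ 2
        = ‖ξ ^ n - 1‖ ^ 2 := by
      rw [Finset.prod_pow, ← norm_prod, ← eval_prod, prod_cyclotomic_eq_X_pow_sub_one hn ℂ,
        eval_sub, eval_pow, eval_X, eval_one]
    rw [← Finset.mul_prod_erase _ _ hnS] at habs
    have hIH : ∀ d ∈ n.divisors.erase n,
        ‖(cyclotomic d ℂ).eval ξ‖ ^ 2 = cval m ξ d := by
      intro d hdmem
      obtain ⟨hdne, hdS⟩ := Finset.mem_erase.mp hdmem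
      obtain ⟨hddvd, -⟩ := Nat.mem_divisors.mp hdS
      exact IH d (lt_of_le_of_ne (Nat.le_of_dvd hn hddvd) hdne)
        (Nat.pos_of_dvd_of_pos hddvd hn)
    rw [Finset.prod_congr rfl hIH] at habs
    have hL1 := cval_L1 hm hξ htot hn hdvd
    rw [← Finset.mul_prod_erase _ _ hnS] at hL1
    have hPne : ∏ d ∈ n.divisors.erase n, cval m ξ d ≠ 0 := by
      rw [Finset.prod_ne_zero_iff]
      intro d hdmem
      obtain ⟨-, hdS⟩ := Finset.mem_erase.mp hdmem
      obtain ⟨hddvd, -⟩ := Nat.mem_divisors.mp hdS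
      have hdm : d ≠ m := by rintro rfl; exact hdvd hddvd
      exact (cval_pos hm hξ hdm).ne'
    exact mul_right_cancel₀ hPne (habs.trans hL1.symm)

theorem abs_cyclotomic_eval_primitiveRoot (m n : ℕ) (hm : m = 1 ∨ m = 2 ∨ m = 3 ∨ m = 4 ∨ m = 6)
    (hmn : m < n) (ξ : ℂ) (hξ : IsPrimitiveRoot ξ m) :
    (∀ p k : ℕ, p.Prime → 1 ≤ k → n = m * p ^ k →
      ‖(cyclotomic n ℂ).eval ξ‖ = p) ∧
    ((¬ ∃ p k : ℕ, p.Prime ∧ 1 ≤ k ∧ n = m * p ^ k) →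
      ‖(cyclotomic n ℂ).eval ξ‖ = 1) := by
  have hm0 : 0 < m := by rcases hm with rfl|rfl|rfl|rfl|rfl <;> norm_num
  have htot : ∀ r, r ∣ m → r.totient ≤ 2 := by
    rcases hm with rfl|rfl|rfl|rfl|rfl <;>
    · intro r hr
      have h1 := Nat.le_of_dvd (by norm_num) hr
      have h0 : r ≠ 0 := by rintro rfl; rw [Nat.zero_dvd] at hr; omega
      interval_cases r <;> revert hr <;> decide
  have key := master hm0 htot hξ n (by omega)
  constructor
  · intro p k hp hk hnk
    have hdvd : m ∣ n := ⟨p ^ k, hnk⟩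
    have htm : n / m = p ^ k := by rw [hnk]; exact Nat.mul_div_cancel_left _ hm0
    have hpp : IsPrimePow (p ^ k) := ⟨p, k, hp.prime, hk, rfl⟩
    have hmf : (p ^ k).minFac = p := by
      rw [Nat.pow_minFac (by omega), hp.minFac_eq]
    have hcv : cval m ξ n = (p : ℝ) ^ 2 := by
      unfold cval
      rw [if_pos hdvd, if_neg (by omega), htm, if_pos hpp, hmf]
    rw [hcv] at key
    exact sq_eq_sq_nonneg (norm_nonneg _) (Nat.cast_nonneg p) key
  · intro hnot
    have hcv : cval m ξ n = 1 := by
      unfold cval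
      by_cases hdvd : m ∣ n
      · rw [if_pos hdvd, if_neg (by omega), if_neg]
        intro hpp
        obtain ⟨p, k, hp, hk, hpk⟩ := hpp
        exact hnot ⟨p, k, Nat.prime_iff.mpr hp, hk,
          by rw [← Nat.mul_div_cancel' hdvd, hpk]⟩
      · rw [if_neg hdvd, if_neg (fun h => absurd (Nat.le_of_dvd hm0 h) (by omega))]
    rw [hcv] at key
    have := sq_eq_sq_nonneg (norm_nonneg _) (zero_le_one) (by rw [key]; norm_num)
    exact this
end

section
/- For n > 1: Φ_n'(1) = p·φ(n)/2 if n = p^e is a prime power, and Φ_n'(1) = φ(n)/2 otherwise; also Φ_1'(1) = 1. -/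
open Polynomial Finset

private lemma deriv_fin_prod {ι : Type*} [DecidableEq ι] (s : Finset ι) (f : ι → ℚ[X]) :
    derivative (∏ b ∈ s, f b) = ∑ b ∈ s, (∏ a ∈ s.erase b, f a) * derivative (f b) := by
  induction s using Finset.induction_on with
  | empty => simp
  | @insert a s ha ih =>
    have hsum : ∑ b ∈ s, (∏ a' ∈ (insert a s).erase b, f a') * derivative (f b)
        = f a * ∑ b ∈ s, (∏ a' ∈ s.erase b, f a') * derivative (f b) := by
      rw [Finset.mul_sum]
      apply Finset.sum_congr rfl
      intro b hb
      have hab : a ≠ b := fun h => ha (h ▸ hb)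
      rw [Finset.erase_insert_of_ne hab,
        Finset.prod_insert (fun h => ha (Finset.mem_of_mem_erase h))]
      ring
    rw [Finset.prod_insert ha, derivative_mul, ih, Finset.sum_insert ha,
      Finset.erase_insert ha, hsum]
    ring

private lemma cyclo_key : ∀ n : ℕ, 2 ≤ n →
    2 * (derivative (cyclotomic n ℚ)).eval 1
      = (cyclotomic n ℚ).eval 1 * n.totient := by
  intro n
  induction n using Nat.strong_induction_on with
  | _ n ih =>
    intro hn
    have hn0 : 0 < n := by omega
    set E : ℕ → ℚ := fun d => (cyclotomic d ℚ).eval 1 with hEdef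
    set D : ℕ → ℚ := fun d => (derivative (cyclotomic d ℚ)).eval 1 with hDdef
    set S := n.divisors.erase 1 with hS
    have hnS : n ∈ S := Finset.mem_erase.2 ⟨by omega, Nat.mem_divisors_self n (by omega)⟩
    have hprod := prod_cyclotomic_eq_geom_sum hn0 ℚ
    have hE : ∏ d ∈ S, E d = n := by
      have := congrArg (eval 1) hprod
      simpa [eval_prod, eval_finset_sum] using this
    have hEne : ∀ d ∈ S, E d ≠ 0 := by
      intro d hd h0
      have : (∏ d ∈ S, E d) = 0 := Finset.prod_eq_zero hd h0
      rw [hE] at this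
      exact_mod_cast absurd this (by positivity)
    have hD : ∑ d ∈ S, (∏ d' ∈ S.erase d, E d') * D d
        = ∑ i ∈ range n, (i : ℚ) := by
      have h1 : (derivative (∏ d ∈ S, cyclotomic d ℚ)).eval 1
          = (derivative (∑ i ∈ range n, (X:ℚ[X]) ^ i)).eval 1 := by rw [hprod]
      rw [deriv_fin_prod] at h1
      simpa [eval_finset_sum, eval_prod, derivative_X_pow] using h1
    have hgauss : (∑ i ∈ range n, (i : ℚ)) * 2 = n * (n - 1) := by
      have := Finset.sum_range_id_mul_two n
      have h2 : ((∑ i ∈ range n, i) * 2 : ℚ) = (n * (n-1) : ℕ) := by exact_mod_cast congrArg (Nat.cast : ℕ → ℚ) this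
      push_cast [Nat.cast_sub hn0] at h2 ⊢
      simpa using h2
    -- totient sum
    have htot : ∑ d ∈ S.erase n, ((d.totient : ℚ)) = n - 1 - n.totient := by
      have h1 : ∑ d ∈ n.divisors, (d.totient : ℚ) = n := by
        exact_mod_cast congrArg (Nat.cast : ℕ → ℚ) (Nat.sum_totient n)
      have h1d : (1 : ℕ) ∈ n.divisors := Nat.one_mem_divisors.2 (by omega)
      have e1 : ∑ d ∈ n.divisors, (d.totient : ℚ)
          = (1:ℚ) + ∑ d ∈ S, (d.totient : ℚ) := by
        rw [← Finset.add_sum_erase _ _ h1d]; simp [hS]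
      have e2 : ∑ d ∈ S, (d.totient : ℚ)
          = (n.totient : ℚ) + ∑ d ∈ S.erase n, (d.totient : ℚ) :=
        (Finset.add_sum_erase _ _ hnS).symm
      rw [e1, e2] at h1
      linarith
    -- split hD at n
    rw [← Finset.add_sum_erase _ _ hnS] at hD
    have hterm : ∀ d ∈ S.erase n,
        2 * ((∏ d' ∈ S.erase d, E d') * D d) = n * d.totient := by
      intro d hd
      have hdS : d ∈ S := Finset.mem_of_mem_erase hd
      have hdne : d ≠ n := Finset.ne_of_mem_erase hd
      have hd2 : 2 ≤ d := by
        have h1 : d ≠ 1 := Finset.ne_of_mem_erase hdS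
        have : 0 < d := Nat.pos_of_mem_divisors (Finset.mem_of_mem_erase hdS)
        omega
      have hdlt : d < n := lt_of_le_of_ne (Nat.le_of_dvd hn0 (Nat.dvd_of_mem_divisors (Finset.mem_of_mem_erase hdS))) hdne
      have hih := ih d hdlt hd2
      have hpe : (∏ d' ∈ S.erase d, E d') * E d = n := by
        rw [Finset.prod_erase_mul _ _ hdS, hE]
      calc 2 * ((∏ d' ∈ S.erase d, E d') * D d)
          = (∏ d' ∈ S.erase d, E d') * (2 * D d) := by ring
        _ = (∏ d' ∈ S.erase d, E d') * (E d * d.totient) := by rw [hih]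
        _ = ((∏ d' ∈ S.erase d, E d') * E d) * d.totient := by ring
        _ = n * d.totient := by rw [hpe]
    have hsum2 : 2 * ∑ d ∈ S.erase n, (∏ d' ∈ S.erase d, E d') * D d
        = n * (n - 1 - n.totient) := by
      rw [Finset.mul_sum, Finset.sum_congr rfl hterm, ← Finset.mul_sum, htot]
    have hpen : (∏ d' ∈ S.erase n, E d') * E n = n := by
      rw [Finset.prod_erase_mul _ _ hnS, hE]
    have hmain : 2 * ((∏ d' ∈ S.erase n, E d') * D n) = n * n.totient := by
      have := congrArg (fun x : ℚ => 2 * x) hD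
      simp only [mul_add] at this
      rw [hsum2] at this
      have hg : 2 * ∑ i ∈ range n, (i:ℚ) = n * (n-1) := by linarith [hgauss]
      rw [hg] at this
      linarith
    -- multiply by E n
    have hnne : (n : ℚ) ≠ 0 := by positivity
    have : 2 * D n * n = n * n.totient * E n := by
      calc 2 * D n * n = 2 * ((∏ d' ∈ S.erase n, E d') * D n) * E n := by rw [← hpen]; ring
        _ = n * n.totient * E n := by rw [hmain]
    field_simp at this
    -- this : 2 * D n * n = n * totient * E n; cancel n
    have := mul_right_cancel₀ hnne (by linear_combination (n:ℚ) * this : 2 * D n * n = E n * n.totient * n)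
    exact this

theorem cyclotomic_derivative_eval_one :
    (derivative (cyclotomic 1 ℚ)).eval 1 = 1 ∧
    (∀ p e : ℕ, p.Prime → 1 ≤ e →
      (derivative (cyclotomic (p ^ e) ℚ)).eval 1 = p * (p ^ e : ℕ).totient / 2) ∧
    (∀ n : ℕ, 1 < n → ¬ IsPrimePow n →
      (derivative (cyclotomic n ℚ)).eval 1 = n.totient / 2) := by
  refine ⟨by simp [cyclotomic_one], ?_, ?_⟩
  · intro p e hp he
    haveI : Fact p.Prime := ⟨hp⟩
    obtain ⟨k, rfl⟩ : ∃ k, e = k + 1 := ⟨e - 1, by omega⟩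
    have h2 : 2 ≤ p ^ (k + 1) := by
      calc 2 ≤ p := hp.two_le
      _ ≤ p ^ (k+1) := Nat.le_self_pow (by omega) p
    have hk := cyclo_key (p ^ (k + 1)) h2
    rw [eval_one_cyclotomic_prime_pow] at hk
    linarith
  · intro n hn hnp
    have h : ∀ {p : ℕ}, p.Prime → ∀ k : ℕ, p ^ k ≠ n := by
      intro p hp k hk
      rcases Nat.eq_zero_or_pos k with rfl | hk0
      · simp at hk; omega
      · exact hnp ⟨p, k, hp.prime, hk0, hk⟩
    have hk := cyclo_key n (by omega)
    rw [eval_one_cyclotomic_not_prime_pow h] at hk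
    linarith
end

section
/- Let f be a monic polynomial with integer coefficients all of whose complex roots lie in the closed unit disc, and suppose f(0) ≠ 0. Then f(1) ≥ 0. Moreover, if f(1) ≠ 0 then f(-1) ≥ 0, and if additionally f(-1) > 0 then f(x) > 0 for all real x. -/
open Polynomial

private lemma multiset_prod_abs_le_one (s : Multiset ℂ)
    (h : ∀ w ∈ s, ‖w‖ ≤ 1) : (s.map (‖·‖)).prod ≤ 1 := by
  induction s using Multiset.induction_on with
  | empty => simp
  | cons a t ih =>
    simp only [Multiset.map_cons, Multiset.prod_cons]
    have ha := h a (Multiset.mem_cons_self a t)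
    have ht := ih (fun w hw => h w (Multiset.mem_cons_of_mem hw))
    have htnn : 0 ≤ (t.map (‖·‖)).prod :=
      Multiset.prod_nonneg (by
        intro x hx
        obtain ⟨w, _, rfl⟩ := Multiset.mem_map.mp hx
        exact norm_nonneg w)
    calc ‖a‖ * (t.map (‖·‖)).prod ≤ 1 * 1 :=
          mul_le_mul ha ht htnn zero_le_one
      _ = 1 := by ring

/-- Every real root of such a polynomial is `1` or `-1`. -/
private lemma real_root_pm_one (f : Polynomial ℤ) (hmonic : f.Monic)
    (hroots : ∀ z : ℂ, Polynomial.aeval z f = 0 → ‖z‖ ≤ 1)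
    (h0 : f.eval 0 ≠ 0) {r : ℝ} (hr : Polynomial.aeval r f = 0) :
    r = 1 ∨ r = -1 := by
  set F := f.map (algebraMap ℤ ℂ) with hF
  have hFmonic : F.Monic := hmonic.map _
  have hFroots : ∀ w ∈ F.roots, ‖w‖ ≤ 1 := by
    intro w hw
    apply hroots
    have := isRoot_of_mem_roots hw
    rw [aeval_def, ← eval_map]
    exact this
  have hzr : Polynomial.aeval ((r : ℂ)) f = 0 := by
    have : (r : ℂ) = algebraMap ℝ ℂ r := rfl
    rw [this, Polynomial.aeval_algebraMap_apply, hr, map_zero]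
  have habs : ‖(r : ℂ)‖ ≤ 1 := hroots _ hzr
  have hrle : |r| ≤ 1 := by rwa [Complex.norm_real, Real.norm_eq_abs] at habs
  have hFne : F ≠ 0 := hFmonic.ne_zero
  have hrmem : (r : ℂ) ∈ F.roots := by
    rw [mem_roots hFne]
    rw [IsRoot, hF, eval_map, ← aeval_def]
    exact hzr
  -- product of abs of roots = |f.eval 0| ≥ 1
  have hsplit : F = (F.roots.map fun a => X - C a).prod :=
    (IsAlgClosed.splits _).eq_prod_roots_of_monic hFmonic
  have heval0 : F.eval 0 = (F.roots.map fun a => -a).prod := by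
    conv_lhs => rw [hsplit]
    rw [eval_multiset_prod, Multiset.map_map]
    congr 1
    apply Multiset.map_congr rfl
    intro a _
    simp
  have habs0 : ‖F.eval 0‖ = (F.roots.map (‖·‖)).prod := by
    rw [heval0, show ‖(Multiset.map (fun a => -a) F.roots).prod‖ = normHom (α := ℂ) (Multiset.map (fun a => -a) F.roots).prod from rfl, map_multiset_prod, Multiset.map_map]
    congr 1
    apply Multiset.map_congr rfl
    intro a _
    simp
  have hge1 : (1 : ℝ) ≤ ‖F.eval 0‖ := by
    have : F.eval 0 = ((f.eval 0 : ℤ) : ℂ) := by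
      rw [hF, eval_zero_map]
      simp
    rw [this]
    rw [Complex.norm_intCast]
    exact_mod_cast Int.one_le_abs h0
  -- now suppose |r| < 1
  by_contra hcon
  push_neg at hcon
  have hrlt : |r| < 1 := by
    rcases lt_or_eq_of_le hrle with h | h
    · exact h
    · exfalso
      rcases abs_eq (by norm_num : (0:ℝ) ≤ 1) |>.mp h with h1 | h1
      · exact hcon.1 h1
      · exact hcon.2 h1
  obtain ⟨t, ht⟩ := Multiset.exists_cons_of_mem hrmem
  have htle : (t.map (‖·‖)).prod ≤ 1 :=
    multiset_prod_abs_le_one t (fun w hw => hFroots w (ht ▸ Multiset.mem_cons_of_mem hw))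
  have : (F.roots.map (‖·‖)).prod < 1 := by
    rw [ht, Multiset.map_cons, Multiset.prod_cons, Complex.norm_real, Real.norm_eq_abs]
    calc |r| * (t.map (‖·‖)).prod ≤ |r| * 1 :=
          mul_le_mul_of_nonneg_left htle (abs_nonneg r)
      _ = |r| := by ring
      _ < 1 := hrlt
  rw [habs0] at hge1
  linarith

/-- A monic real polynomial with no real root is everywhere positive. -/
private lemma monic_pos_of_no_root (p : Polynomial ℝ) (hp : p.Monic)
    (h : ∀ x : ℝ, p.eval x ≠ 0) (x : ℝ) : 0 < p.eval x := by
  by_cases hdeg : 0 < p.degree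
  · by_contra hle
    push_neg at hle
    have hlt : p.eval x < 0 := lt_of_le_of_ne hle (h x)
    have htop := p.tendsto_atTop_of_leadingCoeff_nonneg hdeg (by rw [hp.leadingCoeff]; norm_num)
    obtain ⟨b, hb⟩ := ((htop.eventually_ge_atTop 1).and (Filter.eventually_ge_atTop x)).exists
    have hxb : x ≤ b := hb.2
    have hcont : ContinuousOn (fun y => p.eval y) (Set.Icc x b) :=
      (p.continuous_aeval).continuousOn
    have : (0 : ℝ) ∈ Set.Icc (p.eval x) (p.eval b) := ⟨le_of_lt hlt, by linarith [hb.1]⟩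
    obtain ⟨c, _, hc⟩ := intermediate_value_Icc hxb hcont this
    exact h c hc
  · have : p.natDegree = 0 := natDegree_eq_zero_iff_degree_le_zero.mpr (le_of_not_gt hdeg)
    have hp1 : p = 1 := hp.natDegree_eq_zero.mp this
    rw [hp1]
    simp

theorem kronecker_polynomial_eval (f : Polynomial ℤ) (hmonic : f.Monic)
    (hroots : ∀ z : ℂ, Polynomial.aeval z f = 0 → ‖z‖ ≤ 1)
    (h0 : f.eval 0 ≠ 0) :
    0 ≤ f.eval 1 ∧
    (f.eval 1 ≠ 0 →
      0 ≤ f.eval (-1) ∧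
      (0 < f.eval (-1) → ∀ x : ℝ, 0 < Polynomial.aeval x f)) := by
  set g := f.map (algebraMap ℤ ℝ) with hg
  have hgmonic : g.Monic := hmonic.map _
  have hgeval : ∀ x : ℝ, g.eval x = Polynomial.aeval x f := by
    intro x; rw [hg, eval_map, aeval_def]
  have hcast : ∀ n : ℤ, g.eval (n : ℝ) = ((f.eval n : ℤ) : ℝ) := by
    intro n
    have h := Polynomial.eval_intCast_map (Int.castRingHom ℝ) f n
    simp only [eq_intCast, Int.cast_id] at h
    rw [hg]
    exact h
  have hpm : ∀ r : ℝ, g.eval r = 0 → r = 1 ∨ r = -1 := by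
    intro r hr
    exact real_root_pm_one f hmonic hroots h0 (by rwa [← hgeval])
  -- Part 1 : 0 ≤ f.eval 1
  have part1 : 0 ≤ f.eval 1 := by
    by_contra hlt
    push_neg at hlt
    have h1 : g.eval 1 < 0 := by
      have := hcast 1
      push_cast at this
      rw [this]; exact_mod_cast hlt
    have hdeg : 0 < g.degree := by
      rcases lt_or_ge 0 g.degree with h | h
      · exact h
      · exfalso
        have : g.natDegree = 0 := natDegree_eq_zero_iff_degree_le_zero.mpr h
        have : g = 1 := hgmonic.natDegree_eq_zero.mp this
        rw [this] at h1; norm_num at h1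
    have htop := g.tendsto_atTop_of_leadingCoeff_nonneg hdeg
      (by rw [hgmonic.leadingCoeff]; norm_num)
    obtain ⟨b, hb⟩ := ((htop.eventually_ge_atTop 1).and (Filter.eventually_ge_atTop 1)).exists
    have hcont : ContinuousOn (fun y => g.eval y) (Set.Icc 1 b) :=
      (g.continuous_aeval).continuousOn
    have : (0 : ℝ) ∈ Set.Icc (g.eval 1) (g.eval b) := ⟨le_of_lt h1, by linarith [hb.1]⟩
    obtain ⟨c, hcmem, hc⟩ := intermediate_value_Icc hb.2 hcont this
    rcases hpm c hc with rfl | rfl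
    · exact absurd hc (ne_of_lt h1)
    · linarith [hcmem.1]
  refine ⟨part1, fun h1ne => ?_⟩
  have h1pos : 0 < f.eval 1 := lt_of_le_of_ne part1 (Ne.symm h1ne)
  have hg1 : 0 < g.eval 1 := by
    have := hcast 1; push_cast at this; rw [this]; exact_mod_cast h1pos
  -- Part 2 : 0 ≤ f.eval (-1)
  have part2 : 0 ≤ f.eval (-1) := by
    by_contra hlt
    push_neg at hlt
    have hm1 : g.eval (-1) < 0 := by
      have := hcast (-1); push_cast at this; rw [this]; exact_mod_cast hlt
    have hcont : ContinuousOn (fun y => g.eval y) (Set.Icc (-1 : ℝ) 1) :=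
      (g.continuous_aeval).continuousOn
    have : (0 : ℝ) ∈ Set.Icc (g.eval (-1)) (g.eval 1) := ⟨le_of_lt hm1, le_of_lt hg1⟩
    obtain ⟨c, _, hc⟩ := intermediate_value_Icc (by norm_num : (-1:ℝ) ≤ 1) hcont this
    rcases hpm c hc with rfl | rfl
    · exact absurd hc (ne_of_gt hg1)
    · exact absurd hc (ne_of_lt hm1)
  refine ⟨part2, fun hm1pos x => ?_⟩
  have hgm1 : 0 < g.eval (-1) := by
    have := hcast (-1); push_cast at this; rw [this]; exact_mod_cast hm1pos
  have hnoroot : ∀ y : ℝ, g.eval y ≠ 0 := by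
    intro y hy
    rcases hpm y hy with rfl | rfl
    · exact absurd hy (ne_of_gt hg1)
    · exact absurd hy (ne_of_gt hgm1)
  rw [← hgeval]
  exact monic_pos_of_no_root g hgmonic hnoroot x
end
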